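/- arXiv:math/0603154 — 6 statements merged into one kernel-verified Lean document; each statement's English description precedes it below -/
import Mathlib

section
/- Let X, Y, Z be three random variables defined on the same probability space, all taking values in a finite alphabet A and all having the same distribution. Assume that X, Y, Z are pairwise independent and that there exists a map f : A × A → A with Z = f(X,Y) almost surely. Then their common distribution is the uniform distribution on a subset of A, i.e. uniform on the set {a ∈ A : P(X = a) > 0}. -/
open MeasureTheory ProbabilityTheory

lemma sum_meas {Ω A : Type*} [MeasurableSpace Ω] [MeasurableSpace A]
    [MeasurableSingletonClass A]
    (P : Measure Ω) (g : Ω → A) (hg : Measurable g) (s : Finset A) :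
    P (g ⁻¹' ↑s) = ∑ b ∈ s, P (g ⁻¹' {b}) := by
  have h : (↑s : Set A) = ⋃ b ∈ s, ({b} : Set A) := by ext x; simp
  rw [h, Set.preimage_iUnion₂, measure_biUnion_finset]
  · intro b _ b' _ hbb'
    exact Set.disjoint_left.2 fun ω h1 h2 => hbb' (by
      simp only [Set.mem_preimage, Set.mem_singleton_iff] at h1 h2
      rw [← h1, ← h2])
  · exact fun b _ => hg (measurableSet_singleton b)

set_option maxHeartbeats 1000000 in
/-- **Lemma (pairwise independent triple with a functional relation).**
Let `X, Y, Z` be random variables on a probability space `(Ω, P)`, taking values in a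
finite alphabet `A`, all with the same distribution.  If they are pairwise independent
and `Z = f (X, Y)` almost surely for some map `f : A × A → A`, then their common
distribution is uniform on the set `{a ∈ A : P(X = a) > 0}` of atoms of positive
probability: every atom of positive probability has probability
`1 / #{a : P(X = a) > 0}`. -/
theorem pairwise_indep_functional_relation_uniform
    {Ω : Type*} [MeasurableSpace Ω] (P : Measure Ω) [IsProbabilityMeasure P]
    {A : Type*} [Fintype A] [MeasurableSpace A] [DiscreteMeasurableSpace A]
    (X Y Z : Ω → A)
    (hX : Measurable X) (hY : Measurable Y) (hZ : Measurable Z)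
    (hXY : P.map X = P.map Y) (hXZ : P.map X = P.map Z)
    (hIndXY : IndepFun X Y P) (hIndXZ : IndepFun X Z P) (hIndYZ : IndepFun Y Z P)
    (f : A → A → A) (hf : ∀ᵐ ω ∂P, Z ω = f (X ω) (Y ω)) :
    ∀ a : A, P {ω | X ω = a} ≠ 0 →
      P {ω | X ω = a} =
        1 / (((Finset.univ.filter fun b : A => P {ω | X ω = b} ≠ 0)).card : ENNReal) := by
  classical
  set p : A → ENNReal := fun b => P {ω | X ω = b} with hp
  have hpx : ∀ b, P (X ⁻¹' {b}) = p b := fun b => rfl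
  have hpy : ∀ b, P (Y ⁻¹' {b}) = p b := by
    intro b
    rw [← Measure.map_apply hY (measurableSet_singleton b), ← hXY,
      Measure.map_apply hX (measurableSet_singleton b), hpx]
  have hpz : ∀ b, P (Z ⁻¹' {b}) = p b := by
    intro b
    rw [← Measure.map_apply hZ (measurableSet_singleton b), ← hXZ,
      Measure.map_apply hX (measurableSet_singleton b), hpx]
  have hptop : ∀ b, p b ≠ ⊤ := fun b => measure_ne_top P _
  -- step 1 : conditioning on X = a'
  have step1 : ∀ a' : A, p a' ≠ 0 → ∀ c : A,
      p c = ∑ b ∈ Finset.univ.filter (fun b => f a' b = c), p b := by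
    intro a' ha' c
    set B := Finset.univ.filter (fun b => f a' b = c) with hB
    have h1 : P (X ⁻¹' {a'} ∩ Z ⁻¹' {c}) = p a' * p c := by
      rw [hIndXZ.measure_inter_preimage_eq_mul _ _ (measurableSet_singleton a')
        (measurableSet_singleton c), hpx, hpz]
    have hae : (X ⁻¹' {a'} ∩ Z ⁻¹' {c} : Set Ω) =ᵐ[P] ((X ⁻¹' {a'} ∩ Y ⁻¹' ↑B : Set Ω)) := by
      rw [Filter.eventuallyEq_set]
      filter_upwards [hf] with ω hω
      simp only [Set.mem_inter_iff, Set.mem_preimage, Set.mem_singleton_iff, hω,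
        Finset.coe_filter, Set.mem_setOf_eq, Finset.mem_univ, true_and, hB]
      constructor <;> rintro ⟨rfl, h⟩ <;> exact ⟨rfl, h⟩
    have h2 : P ((X ⁻¹' {a'} ∩ Y ⁻¹' ↑B : Set Ω)) = p a' * ∑ b ∈ B, p b := by
      rw [hIndXY.measure_inter_preimage_eq_mul _ _ (measurableSet_singleton a')
        (MeasurableSet.of_discrete), hpx, sum_meas P Y hY B]
      congr 1
      exact Finset.sum_congr rfl fun b _ => hpy b
    have := h1.symm.trans ((measure_congr hae).trans h2)
    exact (ENNReal.mul_right_inj ha' (hptop a')).1 this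
  -- step 2 : conditioning on Y = b'
  have step2 : ∀ b' : A, p b' ≠ 0 → ∀ c : A,
      p c = ∑ a'' ∈ Finset.univ.filter (fun a'' => f a'' b' = c), p a'' := by
    intro b' hb' c
    set B := Finset.univ.filter (fun a'' => f a'' b' = c) with hB
    have h1 : P (Y ⁻¹' {b'} ∩ Z ⁻¹' {c}) = p b' * p c := by
      rw [hIndYZ.measure_inter_preimage_eq_mul _ _ (measurableSet_singleton b')
        (measurableSet_singleton c), hpy, hpz]
    have hae : (Y ⁻¹' {b'} ∩ Z ⁻¹' {c} : Set Ω) =ᵐ[P] ((Y ⁻¹' {b'} ∩ X ⁻¹' ↑B : Set Ω)) := by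
      rw [Filter.eventuallyEq_set]
      filter_upwards [hf] with ω hω
      simp only [Set.mem_inter_iff, Set.mem_preimage, Set.mem_singleton_iff, hω,
        Finset.coe_filter, Set.mem_setOf_eq, Finset.mem_univ, true_and, hB]
      constructor <;> rintro ⟨rfl, h⟩ <;> exact ⟨rfl, h⟩
    have h2 : P ((Y ⁻¹' {b'} ∩ X ⁻¹' ↑B : Set Ω)) = p b' * ∑ a'' ∈ B, p a'' := by
      rw [hIndXY.symm.measure_inter_preimage_eq_mul _ _ (measurableSet_singleton b')
        (MeasurableSet.of_discrete), hpy, sum_meas P X hX B]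
      rfl
    have := h1.symm.trans ((measure_congr hae).trans h2)
    exact (ENNReal.mul_right_inj hb' (hptop b')).1 this
  intro a ha
  have ha' : p a ≠ 0 := ha
  set S := Finset.univ.filter (fun b : A => p b ≠ 0) with hS
  have hSne : S.Nonempty := ⟨a, by simp [hS, ha']⟩
  obtain ⟨c, hcS, hcmin⟩ := S.exists_min_image p hSne
  have hc0 : p c ≠ 0 := (Finset.mem_filter.1 hcS).2
  -- every atom of positive probability has measure p c
  have key : ∀ a', p a' ≠ 0 → p a' = p c := by
    intro a' ha'
    obtain ⟨b, hb, hb0⟩ : ∃ b ∈ Finset.univ.filter (fun b => f a' b = c), p b ≠ 0 := by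
      by_contra h
      push_neg at h
      exact hc0 ((step1 a' ha' c).trans (Finset.sum_eq_zero h))
    have hfb : f a' b = c := (Finset.mem_filter.1 hb).2
    have h1 : p a' ≤ p c := by
      rw [step2 b hb0 c]
      exact Finset.single_le_sum (fun i _ => zero_le)
        (Finset.mem_filter.2 ⟨Finset.mem_univ _, hfb⟩)
    have h2 : p c ≤ p a' := hcmin a' (Finset.mem_filter.2 ⟨Finset.mem_univ _, ha'⟩)
    exact le_antisymm h1 h2
  -- total mass
  have htot : ∑ b ∈ S, p b = 1 := by
    have h1 : ∑ b : A, p b = 1 := by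
      have h := sum_meas P X hX Finset.univ
      simp only [Finset.coe_univ, Set.preimage_univ, measure_univ] at h
      exact h.symm
    rw [← h1, hS]
    exact Finset.sum_filter_ne_zero _
  have hcard : (S.card : ENNReal) * p c = 1 := by
    rw [← htot, Finset.sum_congr rfl fun b hb => key b (Finset.mem_filter.1 hb).2,
      Finset.sum_const, nsmul_eq_mul]
  have hcne : (S.card : ENNReal) ≠ 0 := by
    simp only [ne_eq, Nat.cast_eq_zero, Finset.card_eq_zero]
    exact hSne.ne_empty
  have hpc : p c = 1 / (S.card : ENNReal) :=
    (ENNReal.eq_div_iff hcne (ENNReal.natCast_ne_top _)).2 hcard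
  show p a = 1 / ((Finset.univ.filter fun b : A => p b ≠ 0).card : ENNReal)
  rw [← hS, key a ha', hpc]
end

section
/- If a stationary process μ on A^ℤ (A a finite alphabet) admits a 3-dot-type self-joining, then either μ is periodic, or the entropy of μ is at least log 2. -/
open MeasureTheory Filter ProbabilityTheory
set_option linter.unusedSectionVars false
set_option linter.unusedVariables false
set_option maxHeartbeats 1000000

/-- The coordinate shift `T` on `A^ℤ`: `(T x) i = x (i+1)`. -/
def shiftT (A : Type*) : (ℤ → A) → (ℤ → A) := fun x i => x (i + 1)

/-- The window `ξ_p^{p+ℓ} = (x_p, …, x_{p+ℓ})` of length `ℓ+1` starting at position `p`. -/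
def window {A : Type*} (ℓ : ℕ) (p : ℤ) (x : ℤ → A) : Fin (ℓ + 1) → A :=
  fun i => x (p + (i : ℕ))

/-- 2-fold mixing of a stationary process `μ` on `A^ℤ`. -/
def Mixing2 {A : Type*} [MeasurableSpace A] (μ : Measure (ℤ → A)) : Prop :=
  ∀ (ℓ : ℕ) (E1 E2 : Set (Fin (ℓ + 1) → A)),
    Tendsto (fun p : ℕ =>
        (μ {x | window ℓ 0 x ∈ E1 ∧ window ℓ (p : ℤ) x ∈ E2}).toReal -
          (μ {x | window ℓ 0 x ∈ E1}).toReal * (μ {x | window ℓ 0 x ∈ E2}).toReal)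
      atTop (nhds 0)

/-- 3-fold mixing of a stationary process `μ` on `A^ℤ`. -/
def Mixing3 {A : Type*} [MeasurableSpace A] (μ : Measure (ℤ → A)) : Prop :=
  ∀ (ℓ : ℕ) (E1 E2 E3 : Set (Fin (ℓ + 1) → A)),
    Tendsto (fun pq : ℕ × ℕ =>
        (μ {x | window ℓ 0 x ∈ E1 ∧ window ℓ (pq.1 : ℤ) x ∈ E2 ∧
              window ℓ ((pq.1 : ℤ) + (pq.2 : ℤ)) x ∈ E3}).toReal -
          (μ {x | window ℓ 0 x ∈ E1}).toReal * (μ {x | window ℓ 0 x ∈ E2}).toReal *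
            (μ {x | window ℓ 0 x ∈ E3}).toReal)
      (atTop ×ˢ atTop) (nhds 0)

/-- The cylinder set `[w] = {x : (x_0,…,x_{m-1}) = w}` associated with a word `w ∈ A^m`. -/
def cylSet {A : Type*} (m : ℕ) (w : Fin m → A) : Set (ℤ → A) :=
  {x | ∀ i : Fin m, x ((i : ℕ) : ℤ) = w i}

/-- `H_m(μ) = -∑_{w ∈ A^m} μ([w]) log μ([w])`. -/
noncomputable def Hm {A : Type*} [Fintype A] [MeasurableSpace A]
    (μ : Measure (ℤ → A)) (m : ℕ) : ℝ :=
  -∑ w : Fin m → A, (μ (cylSet m w)).toReal * Real.log (μ (cylSet m w)).toReal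

/-- `μ` is a periodic process: for some `n ≥ 1`, `μ`-a.e. `x` is `n`-periodic. -/
def PeriodicProcess {A : Type*} [MeasurableSpace A] (μ : Measure (ℤ → A)) : Prop :=
  ∃ n : ℕ, 1 ≤ n ∧ ∀ᵐ x ∂μ, ∀ i : ℤ, x (i + (n : ℤ)) = x i

/-- The simultaneous shift `T × T × T` on the triple product. -/
def shiftT3 (A : Type*) : (ℤ → A) × (ℤ → A) × (ℤ → A) → (ℤ → A) × (ℤ → A) × (ℤ → A) :=
  fun p => (shiftT A p.1, shiftT A p.2.1, shiftT A p.2.2)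

/-- `lam` is a 3-fold self-joining of `μ`: it is invariant under the simultaneous shift
and its three one-dimensional marginals are equal to `μ`. -/
def IsSelfJoining3 {A : Type*} [MeasurableSpace A] (μ : Measure (ℤ → A))
    (lam : Measure ((ℤ → A) × (ℤ → A) × (ℤ → A))) : Prop :=
  lam.map (shiftT3 A) = lam ∧
    lam.map (fun p => p.1) = μ ∧ lam.map (fun p => p.2.1) = μ ∧ lam.map (fun p => p.2.2) = μ

/-- The coordinates `(ξ, ξ', ξ'')` of `lam` are pairwise independent: all three
two-dimensional marginals equal `μ ⊗ μ`. -/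
def PairwiseIndepCoords {A : Type*} [MeasurableSpace A] (μ : Measure (ℤ → A))
    (lam : Measure ((ℤ → A) × (ℤ → A) × (ℤ → A))) : Prop :=
  lam.map (fun p => (p.1, p.2.1)) = μ.prod μ ∧
    lam.map (fun p => (p.1, p.2.2)) = μ.prod μ ∧
      lam.map (fun p => (p.2.1, p.2.2)) = μ.prod μ

/-- A 3-dot-type self-joining of `μ`: a 3-fold self-joining with pairwise independent
coordinates such that `ξ''_i = f (ξ_i, ξ'_i)` a.s. for every `i`, for some `f : A × A → A`. -/
def IsThreeDotJoining {A : Type*} [MeasurableSpace A] (μ : Measure (ℤ → A))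
    (lam : Measure ((ℤ → A) × (ℤ → A) × (ℤ → A))) : Prop :=
  IsSelfJoining3 μ lam ∧ PairwiseIndepCoords μ lam ∧
    ∃ f : A → A → A, ∀ i : ℤ, ∀ᵐ p ∂lam, p.2.2 i = f (p.1 i) (p.2.1 i)

/-- Pure combinatorial lemma: the row/column pushforward conditions force uniformity. -/
lemma uniform_of_rowcol {W : Type*} [Fintype W] [DecidableEq W] (ν : W → ℝ)
    (hn : ∀ w, 0 ≤ ν w) (F : W → W → W)
    (hrow : ∀ u, 0 < ν u → ∀ w,
      ν w = ∑ v ∈ Finset.univ.filter (fun v => F u v = w), ν v)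
    (hcol : ∀ v, 0 < ν v → ∀ w,
      ν w = ∑ u ∈ Finset.univ.filter (fun u => F u v = w), ν u)
    {a b : W} (ha : 0 < ν a) (hb : 0 < ν b) : ν a = ν b := by
  classical
  set s : Finset W := Finset.univ.filter (fun w => 0 < ν w) with hs
  have hmem : ∀ w, w ∈ s ↔ 0 < ν w := by intro w; simp [hs]
  -- row invariance at every u in the support
  have key : ∀ u, 0 < ν u → ∀ v, 0 < ν v → ν (F u v) = ν v := by
    intro u hu
    have hmap : ∀ v, 0 < ν v → 0 < ν (F u v) := by
      intro v hv
      have h1 := hrow u hu (F u v)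
      have h2 : ν v ≤ ∑ v' ∈ Finset.univ.filter (fun v' => F u v' = F u v), ν v' :=
        Finset.single_le_sum (fun v' _ => hn v') (by simp)
      linarith
    have hsurj : ∀ w ∈ s, ∃ v ∈ s, F u v = w := by
      intro w hw
      rw [hmem] at hw
      by_contra hcon
      push_neg at hcon
      have hz : ∑ v ∈ Finset.univ.filter (fun v => F u v = w), ν v = 0 := by
        apply Finset.sum_eq_zero
        intro v hvf
        have hFv := (Finset.mem_filter.mp hvf).2
        by_contra hne
        have hv : 0 < ν v := lt_of_le_of_ne (hn v) (Ne.symm hne)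
        exact (hcon v ((hmem v).mpr hv)) hFv
      have := hrow u hu w
      rw [hz] at this
      linarith
    have hinj : ∀ v₁ ∈ s, ∀ v₂ ∈ s, F u v₁ = F u v₂ → v₁ = v₂ := by
      have := Finset.inj_on_of_surj_on_of_card_le (s := s) (t := s)
        (fun v _ => F u v) (fun v hv => (hmem _).mpr (hmap v ((hmem v).mp hv)))
        (fun w hw => by
          obtain ⟨v, hv, hFv⟩ := hsurj w hw
          exact ⟨v, hv, hFv⟩) le_rfl
      intro v₁ h₁ v₂ h₂ hF
      exact this h₁ h₂ hF
    intro v hv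
    rw [hrow u hu (F u v)]
    rw [Finset.sum_eq_single_of_mem v (by simp)]
    intro v' hv' hne
    by_contra hnz
    have hv'pos : 0 < ν v' := lt_of_le_of_ne (hn v') (Ne.symm hnz)
    exact hne (hinj v' ((hmem _).mpr hv'pos) v ((hmem _).mpr hv)
      (Finset.mem_filter.mp hv').2)
  -- column surjectivity at b
  have : ∃ u, 0 < ν u ∧ F u b = a := by
    by_contra hcon
    push_neg at hcon
    have hz : ∑ u ∈ Finset.univ.filter (fun u => F u b = a), ν u = 0 := by
      apply Finset.sum_eq_zero
      intro u huf
      have hFu := (Finset.mem_filter.mp huf).2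
      by_contra hne
      exact (hcon u (lt_of_le_of_ne (hn u) (Ne.symm hne))) hFu
    have := hcol b hb a
    rw [hz] at this
    linarith
  obtain ⟨u, hu, hub⟩ := this
  calc ν a = ν (F u b) := by rw [hub]
    _ = ν b := key u hu b hb

section Aux
variable {A : Type*} [Fintype A] [MeasurableSpace A] [DiscreteMeasurableSpace A]

/-- window set at position `i`. -/
def wSet (m : ℕ) (i : ℤ) (w : Fin m → A) : Set (ℤ → A) :=
  {x | ∀ j : Fin m, x (i + (j : ℕ)) = w j}

def shiftBy (A : Type*) (n : ℤ) : (ℤ → A) → (ℤ → A) := fun x j => x (j + n)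

lemma measurable_shiftBy (n : ℤ) : Measurable (shiftBy A n) :=
  measurable_pi_lambda _ fun j => measurable_pi_apply _

lemma measurableSet_wSet (m : ℕ) (i : ℤ) (w : Fin m → A) : MeasurableSet (wSet m i w) := by
  have : wSet m i w = ⋂ j : Fin m, (fun x : ℤ → A => x (i + (j : ℕ))) ⁻¹' {w j} := by
    ext x; simp [wSet]
  rw [this]
  exact MeasurableSet.iInter fun j =>
    (measurable_pi_apply _) (measurableSet_singleton _)

lemma cylSet_eq_wSet (m : ℕ) (w : Fin m → A) : cylSet m w = wSet m 0 w := by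
  ext x; simp [cylSet, wSet]

lemma measurableSet_cylSet (m : ℕ) (w : Fin m → A) : MeasurableSet (cylSet m w) := by
  rw [cylSet_eq_wSet]; exact measurableSet_wSet m 0 w

variable (μ : Measure (ℤ → A)) [IsProbabilityMeasure μ]

lemma map_shiftBy (hstat : μ.map (shiftT A) = μ) (n : ℤ) : μ.map (shiftBy A n) = μ := by
  have h1 : shiftBy A 1 = shiftT A := rfl
  have hcomp : ∀ a b : ℤ, shiftBy A a ∘ shiftBy A b = shiftBy A (b + a) := by
    intro a b; funext x j
    simp only [Function.comp_apply, shiftBy]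
    congr 1; ring
  have h0 : shiftBy A 0 = id := by funext x j; simp [shiftBy]
  have hneg : μ.map (shiftBy A (-1)) = μ := by
    conv_lhs => rw [← hstat, ← h1]
    rw [Measure.map_map (measurable_shiftBy _) (measurable_shiftBy _), hcomp]
    norm_num [h0, Measure.map_id]
  induction n using Int.induction_on with
  | zero => rw [h0, Measure.map_id]
  | succ k ih =>
    have : μ.map (shiftBy A (k + 1)) = (μ.map (shiftBy A k)).map (shiftBy A 1) := by
      rw [Measure.map_map (measurable_shiftBy _) (measurable_shiftBy _), hcomp]
    rw [this, ih, h1, hstat]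
  | pred k ih =>
    have : μ.map (shiftBy A (-k - 1)) = (μ.map (shiftBy A (-k))).map (shiftBy A (-1)) := by
      rw [Measure.map_map (measurable_shiftBy _) (measurable_shiftBy _), hcomp]
      ring_nf
    rw [this, ih, hneg]

lemma measure_wSet (hstat : μ.map (shiftT A) = μ) (m : ℕ) (i : ℤ) (w : Fin m → A) :
    μ (wSet m i w) = μ (cylSet m w) := by
  have hpre : shiftBy A i ⁻¹' (wSet m 0 w) = wSet m i w := by
    ext x
    simp only [Set.mem_preimage, wSet, Set.mem_setOf_eq, shiftBy]
    constructor
    · intro h j; have := h j; rw [zero_add] at this; rwa [add_comm] at this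
    · intro h j; rw [zero_add, add_comm]; exact h j
  calc μ (wSet m i w) = μ (shiftBy A i ⁻¹' (wSet m 0 w)) := by rw [hpre]
    _ = (μ.map (shiftBy A i)) (wSet m 0 w) :=
        (Measure.map_apply (measurable_shiftBy _) (measurableSet_wSet m 0 w)).symm
    _ = μ (wSet m 0 w) := by rw [map_shiftBy μ hstat]
    _ = μ (cylSet m w) := by rw [cylSet_eq_wSet]

lemma pairwiseDisjoint_wSet (m : ℕ) (i : ℤ) (s : Finset (Fin m → A)) :
    (s : Set (Fin m → A)).PairwiseDisjoint (wSet m i) := by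
  intro w _ w' _ hne
  refine Set.disjoint_left.mpr fun x hx hx' => hne ?_
  funext j; exact (hx j).symm.trans (hx' j)

lemma sum_measure_wSet (m : ℕ) (i : ℤ) :
    ∑ w : Fin m → A, μ (wSet m i w) = 1 := by
  classical
  have hu : (⋃ w ∈ (Finset.univ : Finset (Fin m → A)), wSet m i w) = Set.univ := by
    ext x
    simp only [Set.mem_iUnion, Set.mem_univ, iff_true]
    exact ⟨fun j => x (i + j), Finset.mem_univ _, fun j => rfl⟩
  have := measure_biUnion_finset (μ := μ) (pairwiseDisjoint_wSet m i Finset.univ)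
    (fun w _ => measurableSet_wSet m i w)
  rw [hu] at this
  rw [← this, measure_univ]


/-- real-valued probability of a cylinder word -/
noncomputable def pr (μ : Measure (ℤ → A)) (m : ℕ) (w : Fin m → A) : ℝ :=
  (μ (cylSet m w)).toReal

noncomputable def suppF (μ : Measure (ℤ → A)) (m : ℕ) : Finset (Fin m → A) :=
  @Finset.filter _ (fun w => 0 < pr μ m w) (Classical.decPred _) Finset.univ

noncomputable def Ncard (μ : Measure (ℤ → A)) (m : ℕ) : ℕ := (suppF μ m).card

lemma mem_suppF {μ : Measure (ℤ → A)} {m : ℕ} {w : Fin m → A} :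
    w ∈ suppF μ m ↔ 0 < pr μ m w := by
  classical
  simp [suppF]

lemma pr_nonneg {m : ℕ} (w : Fin m → A) : 0 ≤ pr μ m w := ENNReal.toReal_nonneg

lemma pr_eq_zero_of_not_mem {m : ℕ} {w : Fin m → A} (h : w ∉ suppF μ m) : pr μ m w = 0 := by
  have := mem_suppF (μ := μ) (m := m) (w := w)
  have h2 : ¬ 0 < pr μ m w := fun hc => h (this.mpr hc)
  linarith [pr_nonneg μ w, not_lt.mp h2]

lemma measure_cylSet_eq_zero {m : ℕ} {w : Fin m → A} (h : w ∉ suppF μ m) :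
    μ (cylSet m w) = 0 := by
  have := pr_eq_zero_of_not_mem μ h
  rw [pr, ENNReal.toReal_eq_zero_iff] at this
  exact this.resolve_right (measure_ne_top μ _)

lemma sum_pr (m : ℕ) : ∑ w : Fin m → A, pr μ m w = 1 := by
  have h := sum_measure_wSet μ m 0
  have : ∑ w : Fin m → A, μ (cylSet m w) = 1 := by
    simpa [cylSet_eq_wSet] using h
  have hne : ∀ w ∈ Finset.univ, μ (cylSet m (w : Fin m → A)) ≠ ⊤ :=
    fun w _ => measure_ne_top μ _
  calc ∑ w : Fin m → A, pr μ m w = (∑ w : Fin m → A, μ (cylSet m w)).toReal :=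
        (ENNReal.toReal_sum hne).symm
    _ = 1 := by rw [this]; simp

lemma Ncard_pos (m : ℕ) : 0 < Ncard μ m := by
  rw [Ncard, Finset.card_pos]
  by_contra h
  rw [Finset.not_nonempty_iff_eq_empty] at h
  have : ∑ w : Fin m → A, pr μ m w = 0 := by
    apply Finset.sum_eq_zero
    intro w _
    apply pr_eq_zero_of_not_mem
    simp [h]
  rw [sum_pr] at this
  norm_num at this

lemma Ncard_zero : Ncard μ 0 = 1 := by
  rw [Ncard]
  have h1 : (suppF μ 0).card ≤ (Finset.univ : Finset (Fin 0 → A)).card :=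
    Finset.card_le_card (Finset.subset_univ _)
  have h2 : (Finset.univ : Finset (Fin 0 → A)).card = 1 := by simp
  have := Ncard_pos μ 0
  rw [Ncard] at this
  omega

/-- first marginal consistency : extend to the right -/
lemma pr_snoc (m : ℕ) (w : Fin m → A) :
    μ (cylSet m w) = ∑ a : A, μ (cylSet (m+1) (Fin.snoc w a)) := by
  classical
  have hu : (⋃ a ∈ (Finset.univ : Finset A), cylSet (m+1) (Fin.snoc w a)) = cylSet m w := by
    ext x
    simp only [Set.mem_iUnion, Finset.mem_univ, exists_true_left, exists_prop, true_and]
    constructor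
    · rintro ⟨a, ha⟩ i
      have := ha (Fin.castSucc i)
      rwa [Fin.snoc_castSucc, Fin.coe_castSucc] at this
    · intro h
      refine ⟨x m, fun i => ?_⟩
      induction i using Fin.lastCases with
      | last => simp [Fin.snoc_last]
      | cast j =>
        rw [Fin.snoc_castSucc, Fin.coe_castSucc]
        exact h j
  have hdisj : (↑(Finset.univ : Finset A) : Set A).PairwiseDisjoint
      (fun a => cylSet (m+1) (Fin.snoc w a)) := by
    intro a _ a' _ hne
    refine Set.disjoint_left.mpr fun x hx hx' => hne ?_
    have h1 := hx (Fin.last m)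
    have h2 := hx' (Fin.last m)
    rw [Fin.snoc_last] at h1 h2
    exact h1.symm.trans h2
  have := measure_biUnion_finset (μ := μ) hdisj
    (fun a _ => measurableSet_cylSet (m+1) _)
  rw [hu] at this
  rw [this]

/-- second marginal consistency : extend to the left (uses stationarity) -/
lemma pr_cons (hstat : μ.map (shiftT A) = μ) (m : ℕ) (w : Fin m → A) :
    μ (cylSet m w) = ∑ a : A, μ (cylSet (m+1) (Fin.cons a w)) := by
  classical
  have hu : (⋃ a ∈ (Finset.univ : Finset A), cylSet (m+1) (Fin.cons a w)) = wSet m 1 w := by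
    ext x
    simp only [Set.mem_iUnion, Finset.mem_univ, exists_prop, true_and]
    constructor
    · rintro ⟨a, ha⟩ j
      have := ha j.succ
      rw [Fin.cons_succ] at this
      rw [← this]
      congr 1
      simp [Fin.val_succ]
      ring
    · intro h
      refine ⟨x 0, fun i => ?_⟩
      induction i using Fin.cases with
      | zero => simp [Fin.cons_zero]
      | succ j =>
        rw [Fin.cons_succ]
        have := h j
        rw [← this]
        congr 1
        simp [Fin.val_succ]
        ring
  have hdisj : (↑(Finset.univ : Finset A) : Set A).PairwiseDisjoint
      (fun a => cylSet (m+1) (Fin.cons a w)) := by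
    intro a _ a' _ hne
    refine Set.disjoint_left.mpr fun x hx hx' => hne ?_
    have h1 := hx 0
    have h2 := hx' 0
    rw [Fin.cons_zero] at h1 h2
    exact h1.symm.trans h2
  have := measure_biUnion_finset (μ := μ) hdisj
    (fun a _ => measurableSet_cylSet (m+1) _)
  rw [hu] at this
  rw [← measure_wSet μ hstat m 1 w, ← this]

lemma init_mem_suppF {m : ℕ} {w : Fin (m+1) → A} (h : w ∈ suppF μ (m+1)) :
    Fin.init w ∈ suppF μ m := by
  rw [mem_suppF] at h ⊢
  have hsub : cylSet (m+1) w ⊆ cylSet m (Fin.init w) := by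
    intro x hx i
    have := hx (Fin.castSucc i)
    rwa [Fin.coe_castSucc] at this
  have : pr μ (m+1) w ≤ pr μ m (Fin.init w) :=
    ENNReal.toReal_mono (measure_ne_top μ _) (measure_mono hsub)
  linarith

lemma tail_mem_suppF (hstat : μ.map (shiftT A) = μ) {m : ℕ} {w : Fin (m+1) → A}
    (h : w ∈ suppF μ (m+1)) : Fin.tail w ∈ suppF μ m := by
  rw [mem_suppF] at h ⊢
  have hsub : cylSet (m+1) w ⊆ wSet m 1 (Fin.tail w) := by
    intro x hx j
    have := hx j.succ
    show x (1 + (j:ℕ)) = w j.succ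
    rw [← this]
    congr 1
    simp [Fin.val_succ]
    ring
  have : pr μ (m+1) w ≤ (μ (wSet m 1 (Fin.tail w))).toReal :=
    ENNReal.toReal_mono (measure_ne_top μ _) (measure_mono hsub)
  have h2 : (μ (wSet m 1 (Fin.tail w))).toReal = pr μ m (Fin.tail w) := by
    rw [pr, measure_wSet μ hstat]
  linarith [h2 ▸ this]


lemma pairwiseDisjoint_cylSet (m : ℕ) (s : Finset (Fin m → A)) :
    (s : Set (Fin m → A)).PairwiseDisjoint (cylSet m) := by
  intro w hw w' hw' hne
  have := pairwiseDisjoint_wSet (A := A) m 0 s hw hw' hne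
  simpa [Function.onFun, cylSet_eq_wSet] using this

section Joining
variable [DecidableEq A]

lemma row_condition
    (lam : Measure ((ℤ → A) × (ℤ → A) × (ℤ → A)))
    (hXY : lam.map (fun p => (p.1, p.2.1)) = μ.prod μ)
    (hXZ : lam.map (fun p => (p.1, p.2.2)) = μ.prod μ)
    (f : A → A → A) (hf : ∀ i : ℤ, ∀ᵐ p ∂lam, p.2.2 i = f (p.1 i) (p.2.1 i))
    (m : ℕ) {u : Fin m → A} (hu : μ (cylSet m u) ≠ 0) (w : Fin m → A) :
    μ (cylSet m w) =
      ∑ v ∈ Finset.univ.filter (fun v : Fin m → A => (fun i => f (u i) (v i)) = w),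
        μ (cylSet m v) := by
  set fs := Finset.univ.filter (fun v : Fin m → A => (fun i => f (u i) (v i)) = w) with hfs
  set V : Set (ℤ → A) := ⋃ v ∈ fs, cylSet m v with hV
  have hVmeas : MeasurableSet V :=
    MeasurableSet.biUnion fs.countable_toSet (fun v _ => measurableSet_cylSet m v)
  have hg1 : Measurable (fun p : (ℤ → A) × (ℤ → A) × (ℤ → A) => (p.1, p.2.2)) :=
    measurable_fst.prodMk (measurable_snd.comp measurable_snd)
  have hg2 : Measurable (fun p : (ℤ → A) × (ℤ → A) × (ℤ → A) => (p.1, p.2.1)) :=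
    measurable_fst.prodMk (measurable_fst.comp measurable_snd)
  have E1 : lam ((fun p : (ℤ → A) × (ℤ → A) × (ℤ → A) => (p.1, p.2.2)) ⁻¹'
      (cylSet m u ×ˢ cylSet m w)) = μ (cylSet m u) * μ (cylSet m w) := by
    rw [← Measure.map_apply hg1 ((measurableSet_cylSet m u).prod (measurableSet_cylSet m w)),
      hXZ, Measure.prod_prod]
  have E2 : lam ((fun p : (ℤ → A) × (ℤ → A) × (ℤ → A) => (p.1, p.2.1)) ⁻¹'
      (cylSet m u ×ˢ V)) = μ (cylSet m u) * μ V := by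
    rw [← Measure.map_apply hg2 ((measurableSet_cylSet m u).prod hVmeas),
      hXY, Measure.prod_prod]
  have hG : ∀ᵐ p ∂lam, ∀ i : Fin m,
      p.2.2 ((i : ℕ) : ℤ) = f (p.1 ((i : ℕ) : ℤ)) (p.2.1 ((i : ℕ) : ℤ)) :=
    ae_all_iff.mpr fun i => hf _
  have hae : ((fun p : (ℤ → A) × (ℤ → A) × (ℤ → A) => (p.1, p.2.2)) ⁻¹'
      (cylSet m u ×ˢ cylSet m w)) =ᶠ[ae lam]
      ((fun p : (ℤ → A) × (ℤ → A) × (ℤ → A) => (p.1, p.2.1)) ⁻¹' (cylSet m u ×ˢ V)) := by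
    rw [Filter.eventuallyEq_set]
    filter_upwards [hG] with p hp
    simp only [Set.mem_preimage, Set.mem_prod]
    constructor
    · rintro ⟨h1, h2⟩
      refine ⟨h1, ?_⟩
      have hv : (fun i : Fin m => f (u i) (p.2.1 ((i : ℕ) : ℤ))) = w := by
        funext i
        rw [← h1 i, ← hp i]
        exact h2 i
      exact Set.mem_iUnion₂.mpr ⟨fun i => p.2.1 ((i : ℕ) : ℤ),
        Finset.mem_filter.mpr ⟨Finset.mem_univ _, hv⟩, fun i => rfl⟩
    · rintro ⟨h1, h2⟩
      refine ⟨h1, ?_⟩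
      obtain ⟨v, hvfs, hvmem⟩ := Set.mem_iUnion₂.mp h2
      have hFv := (Finset.mem_filter.mp hvfs).2
      intro i
      rw [hp i, h1 i, hvmem i]
      exact congrFun hFv i
  have key : μ (cylSet m u) * μ (cylSet m w) = μ (cylSet m u) * μ V := by
    rw [← E1, ← E2, measure_congr hae]
  have hmain : μ (cylSet m w) = μ V :=
    (ENNReal.mul_right_inj hu (measure_ne_top μ _)).mp key
  rw [hmain, hV]
  exact measure_biUnion_finset (pairwiseDisjoint_cylSet m fs)
    (fun v _ => measurableSet_cylSet m v)

lemma col_condition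
    (lam : Measure ((ℤ → A) × (ℤ → A) × (ℤ → A)))
    (hXY : lam.map (fun p => (p.1, p.2.1)) = μ.prod μ)
    (hYZ : lam.map (fun p => (p.2.1, p.2.2)) = μ.prod μ)
    (f : A → A → A) (hf : ∀ i : ℤ, ∀ᵐ p ∂lam, p.2.2 i = f (p.1 i) (p.2.1 i))
    (m : ℕ) {v : Fin m → A} (hv : μ (cylSet m v) ≠ 0) (w : Fin m → A) :
    μ (cylSet m w) =
      ∑ u ∈ Finset.univ.filter (fun u : Fin m → A => (fun i => f (u i) (v i)) = w),
        μ (cylSet m u) := by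
  set fs := Finset.univ.filter (fun u : Fin m → A => (fun i => f (u i) (v i)) = w) with hfs
  set V : Set (ℤ → A) := ⋃ u ∈ fs, cylSet m u with hV
  have hVmeas : MeasurableSet V :=
    MeasurableSet.biUnion fs.countable_toSet (fun u _ => measurableSet_cylSet m u)
  have hg1 : Measurable (fun p : (ℤ → A) × (ℤ → A) × (ℤ → A) => (p.2.1, p.2.2)) :=
    (measurable_fst.comp measurable_snd).prodMk (measurable_snd.comp measurable_snd)
  have hg2 : Measurable (fun p : (ℤ → A) × (ℤ → A) × (ℤ → A) => (p.1, p.2.1)) :=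
    measurable_fst.prodMk (measurable_fst.comp measurable_snd)
  have E1 : lam ((fun p : (ℤ → A) × (ℤ → A) × (ℤ → A) => (p.2.1, p.2.2)) ⁻¹'
      (cylSet m v ×ˢ cylSet m w)) = μ (cylSet m v) * μ (cylSet m w) := by
    rw [← Measure.map_apply hg1 ((measurableSet_cylSet m v).prod (measurableSet_cylSet m w)),
      hYZ, Measure.prod_prod]
  have E2 : lam ((fun p : (ℤ → A) × (ℤ → A) × (ℤ → A) => (p.1, p.2.1)) ⁻¹'
      (V ×ˢ cylSet m v)) = μ V * μ (cylSet m v) := by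
    rw [← Measure.map_apply hg2 (hVmeas.prod (measurableSet_cylSet m v)),
      hXY, Measure.prod_prod]
  have hG : ∀ᵐ p ∂lam, ∀ i : Fin m,
      p.2.2 ((i : ℕ) : ℤ) = f (p.1 ((i : ℕ) : ℤ)) (p.2.1 ((i : ℕ) : ℤ)) :=
    ae_all_iff.mpr fun i => hf _
  have hae : ((fun p : (ℤ → A) × (ℤ → A) × (ℤ → A) => (p.2.1, p.2.2)) ⁻¹'
      (cylSet m v ×ˢ cylSet m w)) =ᶠ[ae lam]
      ((fun p : (ℤ → A) × (ℤ → A) × (ℤ → A) => (p.1, p.2.1)) ⁻¹' (V ×ˢ cylSet m v)) := by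
    rw [Filter.eventuallyEq_set]
    filter_upwards [hG] with p hp
    simp only [Set.mem_preimage, Set.mem_prod]
    constructor
    · rintro ⟨h1, h2⟩
      refine ⟨?_, h1⟩
      have hv2 : (fun i : Fin m => f (p.1 ((i : ℕ) : ℤ)) (v i)) = w := by
        funext i
        rw [← h1 i, ← hp i]
        exact h2 i
      exact Set.mem_iUnion₂.mpr ⟨fun i => p.1 ((i : ℕ) : ℤ),
        Finset.mem_filter.mpr ⟨Finset.mem_univ _, hv2⟩, fun i => rfl⟩
    · rintro ⟨h2, h1⟩
      refine ⟨h1, ?_⟩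
      obtain ⟨u, hufs, humem⟩ := Set.mem_iUnion₂.mp h2
      have hFu := (Finset.mem_filter.mp hufs).2
      intro i
      rw [hp i, h1 i, humem i]
      exact congrFun hFu i
  have key : μ (cylSet m v) * μ (cylSet m w) = μ V * μ (cylSet m v) := by
    rw [← E1, ← E2, measure_congr hae]
  rw [mul_comm (μ (cylSet m v))] at key
  have hmain : μ (cylSet m w) = μ V :=
    (ENNReal.mul_left_inj hv (measure_ne_top μ _)).mp key
  rw [hmain, hV]
  exact measure_biUnion_finset (pairwiseDisjoint_cylSet m fs)
    (fun u _ => measurableSet_cylSet m u)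


lemma pr_row (lam : Measure ((ℤ → A) × (ℤ → A) × (ℤ → A)))
    (hXY : lam.map (fun p => (p.1, p.2.1)) = μ.prod μ)
    (hXZ : lam.map (fun p => (p.1, p.2.2)) = μ.prod μ)
    (f : A → A → A) (hf : ∀ i : ℤ, ∀ᵐ p ∂lam, p.2.2 i = f (p.1 i) (p.2.1 i))
    (m : ℕ) {u : Fin m → A} (hu : 0 < pr μ m u) (w : Fin m → A) :
    pr μ m w = ∑ v ∈ Finset.univ.filter
        (fun v : Fin m → A => (fun i => f (u i) (v i)) = w), pr μ m v := by
  have hu' : μ (cylSet m u) ≠ 0 := by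
    intro hz
    rw [pr, hz] at hu
    simp at hu
  have := row_condition μ lam hXY hXZ f hf m hu' w
  calc pr μ m w = (μ (cylSet m w)).toReal := rfl
    _ = (∑ v ∈ Finset.univ.filter
        (fun v : Fin m → A => (fun i => f (u i) (v i)) = w), μ (cylSet m v)).toReal := by
        rw [← this]
    _ = _ := ENNReal.toReal_sum (fun v _ => measure_ne_top μ _)

lemma pr_col (lam : Measure ((ℤ → A) × (ℤ → A) × (ℤ → A)))
    (hXY : lam.map (fun p => (p.1, p.2.1)) = μ.prod μ)
    (hYZ : lam.map (fun p => (p.2.1, p.2.2)) = μ.prod μ)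
    (f : A → A → A) (hf : ∀ i : ℤ, ∀ᵐ p ∂lam, p.2.2 i = f (p.1 i) (p.2.1 i))
    (m : ℕ) {v : Fin m → A} (hv : 0 < pr μ m v) (w : Fin m → A) :
    pr μ m w = ∑ u ∈ Finset.univ.filter
        (fun u : Fin m → A => (fun i => f (u i) (v i)) = w), pr μ m u := by
  have hv' : μ (cylSet m v) ≠ 0 := by
    intro hz
    rw [pr, hz] at hv
    simp at hv
  have := col_condition μ lam hXY hYZ f hf m hv' w
  calc pr μ m w = (μ (cylSet m w)).toReal := rfl
    _ = (∑ u ∈ Finset.univ.filter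
        (fun u : Fin m → A => (fun i => f (u i) (v i)) = w), μ (cylSet m u)).toReal := by
        rw [← this]
    _ = _ := ENNReal.toReal_sum (fun u _ => measure_ne_top μ _)

lemma pr_uniform (lam : Measure ((ℤ → A) × (ℤ → A) × (ℤ → A)))
    (hXY : lam.map (fun p => (p.1, p.2.1)) = μ.prod μ)
    (hXZ : lam.map (fun p => (p.1, p.2.2)) = μ.prod μ)
    (hYZ : lam.map (fun p => (p.2.1, p.2.2)) = μ.prod μ)
    (f : A → A → A) (hf : ∀ i : ℤ, ∀ᵐ p ∂lam, p.2.2 i = f (p.1 i) (p.2.1 i))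
    (m : ℕ) {w : Fin m → A} (hw : w ∈ suppF μ m) :
    pr μ m w = 1 / (Ncard μ m : ℝ) := by
  classical
  have hconst : ∀ w' ∈ suppF μ m, pr μ m w' = pr μ m w := by
    intro w' hw'
    exact uniform_of_rowcol (pr μ m) (pr_nonneg μ) (fun u v => fun i => f (u i) (v i))
      (fun u hu w0 => pr_row μ lam hXY hXZ f hf m hu w0)
      (fun v hv w0 => pr_col μ lam hXY hYZ f hf m hv w0)
      (mem_suppF.mp hw') (mem_suppF.mp hw)
  have hsum : ∑ w' ∈ suppF μ m, pr μ m w' = 1 := by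
    rw [← sum_pr μ m]
    symm
    apply (Finset.sum_subset (Finset.subset_univ _) _).symm
    intro w' _ hw'
    exact pr_eq_zero_of_not_mem μ hw'
  have : (Ncard μ m : ℝ) * pr μ m w = 1 := by
    rw [← hsum, Finset.sum_congr rfl hconst, Finset.sum_const, Ncard, nsmul_eq_mul]
  have hN : (Ncard μ m : ℝ) ≠ 0 := by
    have := Ncard_pos μ m
    positivity
  field_simp at this ⊢
  linarith


lemma count_snoc (lam : Measure ((ℤ → A) × (ℤ → A) × (ℤ → A)))
    (hXY : lam.map (fun p => (p.1, p.2.1)) = μ.prod μ)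
    (hXZ : lam.map (fun p => (p.1, p.2.2)) = μ.prod μ)
    (hYZ : lam.map (fun p => (p.2.1, p.2.2)) = μ.prod μ)
    (f : A → A → A) (hf : ∀ i : ℤ, ∀ᵐ p ∂lam, p.2.2 i = f (p.1 i) (p.2.1 i))
    (m : ℕ) {u : Fin m → A} (hu : u ∈ suppF μ m) :
    Ncard μ (m+1) =
      (Finset.univ.filter (fun a : A => Fin.snoc u a ∈ suppF μ (m+1))).card * Ncard μ m := by
  classical
  have h1 : pr μ m u = ∑ a : A, pr μ (m+1) (Fin.snoc u a) := by
    rw [pr, pr_snoc μ m u]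
    exact ENNReal.toReal_sum (fun a _ => measure_ne_top μ _)
  rw [pr_uniform μ lam hXY hXZ hYZ f hf m hu] at h1
  have h2 : ∑ a : A, pr μ (m+1) (Fin.snoc u a) =
      ∑ a ∈ Finset.univ.filter (fun a : A => Fin.snoc u a ∈ suppF μ (m+1)),
        pr μ (m+1) (Fin.snoc u a) := by
    symm
    apply Finset.sum_subset (Finset.filter_subset _ _)
    intro a _ ha
    simp only [Finset.mem_filter, Finset.mem_univ, true_and] at ha
    exact pr_eq_zero_of_not_mem μ ha
  have h3 : ∑ a ∈ Finset.univ.filter (fun a : A => Fin.snoc u a ∈ suppF μ (m+1)),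
      pr μ (m+1) (Fin.snoc u a) =
      ((Finset.univ.filter (fun a : A => Fin.snoc u a ∈ suppF μ (m+1))).card : ℝ) *
        (1 / (Ncard μ (m+1) : ℝ)) := by
    rw [Finset.sum_congr rfl (fun a ha => pr_uniform μ lam hXY hXZ hYZ f hf (m+1)
      ((Finset.mem_filter.mp ha).2)), Finset.sum_const, nsmul_eq_mul]
  rw [h2, h3] at h1
  have hNm : (Ncard μ m : ℝ) ≠ 0 := by have := Ncard_pos μ m; positivity
  have hNm1 : (Ncard μ (m+1) : ℝ) ≠ 0 := by have := Ncard_pos μ (m+1); positivity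
  have : (Ncard μ (m+1) : ℝ) =
      ((Finset.univ.filter (fun a : A => Fin.snoc u a ∈ suppF μ (m+1))).card : ℝ) *
        (Ncard μ m : ℝ) := by
    field_simp at h1
    linarith
  exact_mod_cast this

lemma count_cons (hstat : μ.map (shiftT A) = μ)
    (lam : Measure ((ℤ → A) × (ℤ → A) × (ℤ → A)))
    (hXY : lam.map (fun p => (p.1, p.2.1)) = μ.prod μ)
    (hXZ : lam.map (fun p => (p.1, p.2.2)) = μ.prod μ)
    (hYZ : lam.map (fun p => (p.2.1, p.2.2)) = μ.prod μ)
    (f : A → A → A) (hf : ∀ i : ℤ, ∀ᵐ p ∂lam, p.2.2 i = f (p.1 i) (p.2.1 i))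
    (m : ℕ) {u : Fin m → A} (hu : u ∈ suppF μ m) :
    Ncard μ (m+1) =
      (Finset.univ.filter (fun a : A => Fin.cons a u ∈ suppF μ (m+1))).card * Ncard μ m := by
  classical
  have h1 : pr μ m u = ∑ a : A, pr μ (m+1) (Fin.cons a u) := by
    rw [pr, pr_cons μ hstat m u]
    exact ENNReal.toReal_sum (fun a _ => measure_ne_top μ _)
  rw [pr_uniform μ lam hXY hXZ hYZ f hf m hu] at h1
  have h2 : ∑ a : A, pr μ (m+1) (Fin.cons a u) =
      ∑ a ∈ Finset.univ.filter (fun a : A => Fin.cons a u ∈ suppF μ (m+1)),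
        pr μ (m+1) (Fin.cons a u) := by
    symm
    apply Finset.sum_subset (Finset.filter_subset _ _)
    intro a _ ha
    simp only [Finset.mem_filter, Finset.mem_univ, true_and] at ha
    exact pr_eq_zero_of_not_mem μ ha
  have h3 : ∑ a ∈ Finset.univ.filter (fun a : A => Fin.cons a u ∈ suppF μ (m+1)),
      pr μ (m+1) (Fin.cons a u) =
      ((Finset.univ.filter (fun a : A => Fin.cons a u ∈ suppF μ (m+1))).card : ℝ) *
        (1 / (Ncard μ (m+1) : ℝ)) := by
    rw [Finset.sum_congr rfl (fun a ha => pr_uniform μ lam hXY hXZ hYZ f hf (m+1)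
      ((Finset.mem_filter.mp ha).2)), Finset.sum_const, nsmul_eq_mul]
  rw [h2, h3] at h1
  have hNm : (Ncard μ m : ℝ) ≠ 0 := by have := Ncard_pos μ m; positivity
  have hNm1 : (Ncard μ (m+1) : ℝ) ≠ 0 := by have := Ncard_pos μ (m+1); positivity
  have : (Ncard μ (m+1) : ℝ) =
      ((Finset.univ.filter (fun a : A => Fin.cons a u ∈ suppF μ (m+1))).card : ℝ) *
        (Ncard μ m : ℝ) := by
    field_simp at h1
    linarith
  exact_mod_cast this

lemma Hm_eq_log (lam : Measure ((ℤ → A) × (ℤ → A) × (ℤ → A)))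
    (hXY : lam.map (fun p => (p.1, p.2.1)) = μ.prod μ)
    (hXZ : lam.map (fun p => (p.1, p.2.2)) = μ.prod μ)
    (hYZ : lam.map (fun p => (p.2.1, p.2.2)) = μ.prod μ)
    (f : A → A → A) (hf : ∀ i : ℤ, ∀ᵐ p ∂lam, p.2.2 i = f (p.1 i) (p.2.1 i))
    (m : ℕ) : Hm μ m = Real.log (Ncard μ m) := by
  classical
  have hNm : (0:ℝ) < (Ncard μ m : ℝ) := by exact_mod_cast Ncard_pos μ m
  have h1 : ∑ w : Fin m → A, pr μ m w * Real.log (pr μ m w) =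
      ∑ w ∈ suppF μ m, pr μ m w * Real.log (pr μ m w) := by
    symm
    apply Finset.sum_subset (Finset.subset_univ _)
    intro w _ hw
    rw [pr_eq_zero_of_not_mem μ hw]
    simp
  have h2 : ∑ w ∈ suppF μ m, pr μ m w * Real.log (pr μ m w) =
      (Ncard μ m : ℝ) * ((1 / (Ncard μ m : ℝ)) * Real.log (1 / (Ncard μ m : ℝ))) := by
    rw [Finset.sum_congr rfl (fun w hw => by
      rw [pr_uniform μ lam hXY hXZ hYZ f hf m hw]), Finset.sum_const, Ncard, nsmul_eq_mul]
  have h3 : (Ncard μ m : ℝ) * ((1 / (Ncard μ m : ℝ)) * Real.log (1 / (Ncard μ m : ℝ))) =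
      - Real.log (Ncard μ m : ℝ) := by
    rw [one_div, Real.log_inv]
    field_simp
  rw [Hm]
  have : ∑ w : Fin m → A, (μ (cylSet m w)).toReal * Real.log (μ (cylSet m w)).toReal =
      ∑ w : Fin m → A, pr μ m w * Real.log (pr μ m w) := rfl
  rw [this, h1, h2, h3, neg_neg]

lemma Ncard_subadd (hstat : μ.map (shiftT A) = μ) (m n : ℕ) :
    Ncard μ (m+n) ≤ Ncard μ m * Ncard μ n := by
  classical
  have h := Finset.card_le_card_of_injOn
    (f := fun w : Fin (m+n) → A =>
      ((fun i : Fin m => w (Fin.castAdd n i)), (fun j : Fin n => w (Fin.natAdd m j))))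
    (s := suppF μ (m+n)) (t := (suppF μ m) ×ˢ (suppF μ n)) ?_ ?_
  · rw [Finset.card_product] at h
    exact h
  · intro w hw
    rw [Finset.mem_coe, Finset.mem_product]
    rw [Finset.mem_coe, mem_suppF] at hw
    constructor
    · rw [mem_suppF]
      have hsub : cylSet (m+n) w ⊆ cylSet m (fun i : Fin m => w (Fin.castAdd n i)) := by
        intro x hx i
        have := hx (Fin.castAdd n i)
        rwa [Fin.coe_castAdd] at this
      have : pr μ (m+n) w ≤ pr μ m (fun i : Fin m => w (Fin.castAdd n i)) :=
        ENNReal.toReal_mono (measure_ne_top μ _) (measure_mono hsub)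
      linarith
    · rw [mem_suppF]
      have hsub : cylSet (m+n) w ⊆ wSet n (m : ℤ) (fun j : Fin n => w (Fin.natAdd m j)) := by
        intro x hx j
        have := hx (Fin.natAdd m j)
        show x ((m:ℤ) + ((j:ℕ):ℤ)) = w (Fin.natAdd m j)
        rw [← this]
        congr 1
      have h5 : pr μ (m+n) w ≤ (μ (wSet n (m:ℤ) (fun j : Fin n => w (Fin.natAdd m j)))).toReal :=
        ENNReal.toReal_mono (measure_ne_top μ _) (measure_mono hsub)
      have h6 : (μ (wSet n (m:ℤ) (fun j : Fin n => w (Fin.natAdd m j)))).toReal =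
          pr μ n (fun j : Fin n => w (Fin.natAdd m j)) := by
        rw [pr, measure_wSet μ hstat]
      linarith [h6 ▸ h5]
  · intro w hw w' hw' heq
    simp only [Prod.mk.injEq] at heq
    funext i
    induction i using Fin.addCases with
    | left i => exact congrFun heq.1 i
    | right j => exact congrFun heq.2 j


lemma ext_unique_right (lam : Measure ((ℤ → A) × (ℤ → A) × (ℤ → A)))
    (hXY : lam.map (fun p => (p.1, p.2.1)) = μ.prod μ)
    (hXZ : lam.map (fun p => (p.1, p.2.2)) = μ.prod μ)
    (hYZ : lam.map (fun p => (p.2.1, p.2.2)) = μ.prod μ)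
    (f : A → A → A) (hf : ∀ i : ℤ, ∀ᵐ p ∂lam, p.2.2 i = f (p.1 i) (p.2.1 i))
    (m : ℕ) (hlt : Ncard μ (m+1) < 2 * Ncard μ m) :
    ∀ w ∈ suppF μ (m+1), ∀ w' ∈ suppF μ (m+1), Fin.init w = Fin.init w' → w = w' := by
  classical
  intro w hw w' hw' hinit
  set u := Fin.init w with hu
  have humem : u ∈ suppF μ m := init_mem_suppF μ hw
  have hcount := count_snoc μ lam hXY hXZ hYZ f hf m humem
  have hNm := Ncard_pos μ m
  set E := (Finset.univ.filter (fun a : A => Fin.snoc u a ∈ suppF μ (m+1))).card with hE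
  have hElt : E < 2 := by nlinarith [hcount, hlt, hNm]
  have hcard : (Finset.univ.filter (fun a : A => Fin.snoc u a ∈ suppF μ (m+1))).card ≤ 1 := by
    omega
  have hw2 : Fin.snoc u (w (Fin.last m)) = w := Fin.snoc_init_self w
  have hw2' : Fin.snoc u (w' (Fin.last m)) = w' := by
    rw [hinit]
    exact Fin.snoc_init_self w'
  have hmem1 : w (Fin.last m) ∈ Finset.univ.filter
      (fun a : A => Fin.snoc u a ∈ suppF μ (m+1)) := by
    simp only [Finset.mem_filter, Finset.mem_univ, true_and, hw2]
    exact hw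
  have hmem2 : w' (Fin.last m) ∈ Finset.univ.filter
      (fun a : A => Fin.snoc u a ∈ suppF μ (m+1)) := by
    simp only [Finset.mem_filter, Finset.mem_univ, true_and, hw2']
    exact hw'
  have : w (Fin.last m) = w' (Fin.last m) :=
    Finset.card_le_one.mp hcard _ hmem1 _ hmem2
  rw [← hw2, ← hw2', this]

lemma ext_unique_left (hstat : μ.map (shiftT A) = μ)
    (lam : Measure ((ℤ → A) × (ℤ → A) × (ℤ → A)))
    (hXY : lam.map (fun p => (p.1, p.2.1)) = μ.prod μ)
    (hXZ : lam.map (fun p => (p.1, p.2.2)) = μ.prod μ)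
    (hYZ : lam.map (fun p => (p.2.1, p.2.2)) = μ.prod μ)
    (f : A → A → A) (hf : ∀ i : ℤ, ∀ᵐ p ∂lam, p.2.2 i = f (p.1 i) (p.2.1 i))
    (m : ℕ) (hlt : Ncard μ (m+1) < 2 * Ncard μ m) :
    ∀ w ∈ suppF μ (m+1), ∀ w' ∈ suppF μ (m+1), Fin.tail w = Fin.tail w' → w = w' := by
  classical
  intro w hw w' hw' htail
  set u := Fin.tail w with hu
  have humem : u ∈ suppF μ m := tail_mem_suppF μ hstat hw
  have hcount := count_cons μ hstat lam hXY hXZ hYZ f hf m humem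
  have hNm := Ncard_pos μ m
  set E := (Finset.univ.filter (fun a : A => Fin.cons a u ∈ suppF μ (m+1))).card with hE
  have hElt : E < 2 := by nlinarith [hcount, hlt, hNm]
  have hcard : (Finset.univ.filter (fun a : A => Fin.cons a u ∈ suppF μ (m+1))).card ≤ 1 := by
    omega
  have hw2 : Fin.cons (w 0) u = w := Fin.cons_self_tail w
  have hw2' : Fin.cons (w' 0) u = w' := by
    rw [htail]
    exact Fin.cons_self_tail w'
  have hmem1 : w 0 ∈ Finset.univ.filter
      (fun a : A => Fin.cons a u ∈ suppF μ (m+1)) := by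
    simp only [Finset.mem_filter, Finset.mem_univ, true_and, hw2]
    exact hw
  have hmem2 : w' 0 ∈ Finset.univ.filter
      (fun a : A => Fin.cons a u ∈ suppF μ (m+1)) := by
    simp only [Finset.mem_filter, Finset.mem_univ, true_and, hw2']
    exact hw'
  have : w 0 = w' 0 := Finset.card_le_one.mp hcard _ hmem1 _ hmem2
  rw [← hw2, ← hw2', this]

lemma ae_window_mem (hstat : μ.map (shiftT A) = μ) (m : ℕ) :
    ∀ᵐ x ∂μ, ∀ i : ℤ, (fun j : Fin m => x (i + (j : ℕ))) ∈ suppF μ m := by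
  classical
  rw [ae_all_iff]
  intro i
  rw [ae_iff]
  set B := ⋃ w ∈ Finset.univ.filter
    (fun w : Fin m → A => w ∉ suppF μ m), wSet m i w with hB
  have hsub : {x : ℤ → A | ¬ (fun j : Fin m => x (i + (j : ℕ))) ∈ suppF μ m} ⊆ B := by
    intro x hx
    simp only [Set.mem_setOf_eq] at hx
    exact Set.mem_iUnion₂.mpr ⟨fun j : Fin m => x (i + (j : ℕ)),
      Finset.mem_filter.mpr ⟨Finset.mem_univ _, hx⟩, fun j => rfl⟩
  have hnull : μ B = 0 := by
    have hle := measure_biUnion_finset_le (μ := μ)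
      (Finset.univ.filter (fun w : Fin m → A => w ∉ suppF μ m)) (wSet m i)
    have hz : ∀ w ∈ Finset.univ.filter (fun w : Fin m → A => w ∉ suppF μ m),
        μ (wSet m i w) = 0 := by
      intro w hwmem
      rw [measure_wSet μ hstat]
      exact measure_cylSet_eq_zero μ (Finset.mem_filter.mp hwmem).2
    rw [Finset.sum_congr rfl hz, Finset.sum_const_zero] at hle
    exact le_antisymm hle zero_le
  exact measure_mono_null hsub hnull

end Joining

lemma pointwise_period {A : Type*} (m : ℕ) (S : Finset (Fin (m+1) → A))
    (Hr : ∀ w ∈ S, ∀ w' ∈ S, Fin.init w = Fin.init w' → w = w')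
    (Hl : ∀ w ∈ S, ∀ w' ∈ S, Fin.tail w = Fin.tail w' → w = w')
    (x : ℤ → A) (hx : ∀ i : ℤ, (fun j : Fin (m+1) => x (i + (j : ℕ))) ∈ S) :
    ∃ d : ℕ, 1 ≤ d ∧ d ≤ S.card ∧ ∀ i : ℤ, x (i + (d : ℤ)) = x i := by
  classical
  set W : ℤ → (Fin (m+1) → A) := fun i => fun j => x (i + (j : ℕ)) with hWdef
  have hWS : ∀ i : ℤ, W i ∈ S := fun i => hx i
  have hover : ∀ i : ℤ, Fin.tail (W i) = Fin.init (W (i+1)) := by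
    intro i
    funext j
    show W i j.succ = W (i+1) (Fin.castSucc j)
    simp only [hWdef]
    congr 1
    simp only [Fin.val_succ, Fin.coe_castSucc]
    push_cast
    ring
  have step1 : ∀ i j : ℤ, W i = W j → W (i+1) = W (j+1) := by
    intro i j h
    apply Hr _ (hWS _) _ (hWS _)
    rw [← hover i, ← hover j, h]
  have step1' : ∀ i j : ℤ, W i = W j → W (i-1) = W (j-1) := by
    intro i j h
    apply Hl _ (hWS _) _ (hWS _)
    have h1 := hover (i-1)
    have h2 := hover (j-1)
    rw [sub_add_cancel] at h1 h2
    rw [h1, h2, h]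
  have step2 : ∀ t : ℤ, ∀ i j : ℤ, W i = W j → W (i+t) = W (j+t) := by
    intro t
    induction t using Int.induction_on with
    | zero => intro i j h; simpa using h
    | succ k ih =>
      intro i j h
      have := step1 _ _ (ih i j h)
      have e1 : i + (k+1) = (i + k) + 1 := by ring
      have e2 : j + (k+1) = (j + k) + 1 := by ring
      rw [e1, e2]
      exact this
    | pred k ih =>
      intro i j h
      have := step1' _ _ (ih i j h)
      have e1 : i + (-(k:ℤ)-1) = (i + (-(k:ℤ))) - 1 := by ring
      have e2 : j + (-(k:ℤ)-1) = (j + (-(k:ℤ))) - 1 := by ring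
      rw [e1, e2]
      exact this
  have hmaps : ∀ k ∈ Finset.range (S.card + 1), W (k : ℤ) ∈ S := fun k _ => hWS _
  have hltc : S.card < (Finset.range (S.card + 1)).card := by simp
  obtain ⟨i, hi, j, hj, hne, hWij⟩ :=
    Finset.exists_ne_map_eq_of_card_lt_of_maps_to hltc hmaps
  rw [Finset.mem_range] at hi hj
  -- order them
  obtain ⟨i, j, hij, hjle, hWeq⟩ : ∃ i j : ℕ, i < j ∧ j ≤ S.card ∧ W (i:ℤ) = W (j:ℤ) := by
    rcases lt_or_gt_of_ne hne with h | h
    · exact ⟨i, j, h, by omega, hWij⟩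
    · exact ⟨j, i, h, by omega, hWij.symm⟩
  refine ⟨j - i, by omega, by omega, ?_⟩
  intro s
  have hcast : ((j - i : ℕ) : ℤ) = (j : ℤ) - (i : ℤ) := by
    push_cast [Nat.cast_sub hij.le]
    ring
  have hper : W (s + ((j-i : ℕ) : ℤ)) = W s := by
    have := step2 (s - (i:ℤ)) _ _ hWeq
    have e1 : (i:ℤ) + (s - (i:ℤ)) = s := by ring
    have e2 : (j:ℤ) + (s - (i:ℤ)) = s + ((j:ℤ) - (i:ℤ)) := by ring
    rw [e1, e2] at this
    rw [hcast]
    exact this.symm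
  have := congrFun hper (0 : Fin (m+1))
  simp only [hWdef] at this
  simpa using this


end Aux


/-- **Theorem (obstruction to 3-dot-type self-joinings in dimension one).**
If a stationary process `μ` on `A^ℤ` (with `A` a finite alphabet) admits a 3-dot-type
self-joining, then either `μ` is a periodic process, or the entropy
`h(μ) = lim_m H_m(μ)/m` of `μ` is at least `log 2`. -/
theorem threeDot_joining_periodic_or_entropy_ge_log_two
    {A : Type*} [Fintype A] [MeasurableSpace A] [DiscreteMeasurableSpace A]
    (μ : Measure (ℤ → A)) [IsProbabilityMeasure μ]
    (hstat : μ.map (shiftT A) = μ)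
    (lam : Measure ((ℤ → A) × (ℤ → A) × (ℤ → A)))
    (hlam : IsThreeDotJoining μ lam) :
    PeriodicProcess μ ∨
      ∃ h : ℝ, Tendsto (fun m : ℕ => Hm μ m / (m : ℝ)) atTop (nhds h) ∧ Real.log 2 ≤ h := by
  classical
  obtain ⟨⟨hinv, hm1, hm2, hm3⟩, ⟨hXY, hXZ, hYZ⟩, f, hf⟩ := hlam
  by_cases hA : ∃ m : ℕ, Ncard μ (m+1) < 2 * Ncard μ m
  · left
    obtain ⟨m, hlt⟩ := hA
    refine ⟨(Ncard μ (m+1)).factorial,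
      Nat.one_le_iff_ne_zero.mpr (Nat.factorial_ne_zero _), ?_⟩
    have Hr := ext_unique_right μ lam hXY hXZ hYZ f hf m hlt
    have Hl := ext_unique_left μ hstat lam hXY hXZ hYZ f hf m hlt
    filter_upwards [ae_window_mem μ hstat (m+1)] with x hx
    obtain ⟨d, hd1, hd2, hper⟩ := pointwise_period m (suppF μ (m+1)) Hr Hl x hx
    intro i
    have hdvd : d ∣ (Ncard μ (m+1)).factorial := Nat.dvd_factorial hd1 hd2
    obtain ⟨c, hc⟩ := hdvd
    have hrep : ∀ c : ℕ, ∀ s : ℤ, x (s + ((d * c : ℕ) : ℤ)) = x s := by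
      intro c
      induction c with
      | zero => intro s; simp
      | succ c ih =>
        intro s
        have e : s + ((d * (c+1) : ℕ) : ℤ) = (s + (d : ℤ)) + ((d * c : ℕ) : ℤ) := by
          push_cast
          ring
        rw [e, ih (s + (d:ℤ)), hper s]
    rw [hc]
    exact hrep c i
  · right
    push_neg at hA
    have hpow : ∀ m : ℕ, 2^m ≤ Ncard μ m := by
      intro m
      induction m with
      | zero => simp [Ncard_zero]
      | succ m ih =>
        calc 2^(m+1) = 2 * 2^m := by ring
          _ ≤ 2 * Ncard μ m := by omega
          _ ≤ Ncard μ (m+1) := hA m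
    have hHm : ∀ m, Hm μ m = Real.log (Ncard μ m) := Hm_eq_log μ lam hXY hXZ hYZ f hf
    have hsub : Subadditive (fun m => Hm μ m) := by
      intro m n
      simp only []
      rw [hHm, hHm, hHm]
      have h1 : (0:ℝ) < (Ncard μ m : ℝ) := by exact_mod_cast Ncard_pos μ m
      have h2 : (0:ℝ) < (Ncard μ n : ℝ) := by exact_mod_cast Ncard_pos μ n
      have h3 : (0:ℝ) < (Ncard μ (m+n) : ℝ) := by exact_mod_cast Ncard_pos μ (m+n)
      calc Real.log (Ncard μ (m+n))
          ≤ Real.log ((Ncard μ m : ℝ) * (Ncard μ n : ℝ)) := by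
            apply Real.log_le_log h3
            have := Ncard_subadd μ hstat m n
            exact_mod_cast this
        _ = Real.log (Ncard μ m) + Real.log (Ncard μ n) :=
            Real.log_mul h1.ne' h2.ne'
    have hbdd : BddBelow (Set.range fun n : ℕ => Hm μ n / n) := by
      refine ⟨0, ?_⟩
      rintro y ⟨n, rfl⟩
      have h1 : (1:ℝ) ≤ (Ncard μ n : ℝ) := by exact_mod_cast Ncard_pos μ n
      have : 0 ≤ Hm μ n := by
        rw [hHm]
        exact Real.log_nonneg h1
      positivity
    refine ⟨hsub.lim, hsub.tendsto_lim hbdd, ?_⟩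
    rw [Subadditive.lim]
    apply le_csInf
    · exact ⟨(fun n : ℕ => Hm μ n / (n:ℝ)) 1, ⟨1, Set.mem_Ici.mpr le_rfl, rfl⟩⟩
    · rintro y ⟨n, hn, rfl⟩
      simp only [Set.mem_Ici] at hn
      have hnpos : (0:ℝ) < (n:ℝ) := by exact_mod_cast hn
      show Real.log 2 ≤ Hm μ n / (n:ℝ)
      rw [hHm, le_div_iff₀ hnpos]
      have h2n : ((2:ℝ))^n ≤ (Ncard μ n : ℝ) := by exact_mod_cast hpow n
      have hkey : (n:ℝ) * Real.log 2 ≤ Real.log (Ncard μ n) := by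
        calc (n:ℝ) * Real.log 2 = Real.log ((2:ℝ)^n) := by rw [Real.log_pow]
          _ ≤ Real.log (Ncard μ n) := Real.log_le_log (by positivity) h2n
      linarith
end

section
/- If μ is a stationary process on A^ℤ (A a finite alphabet) which is 2-fold mixing but not 3-fold mixing, then there exists a 3-fold self-joining λ of μ whose coordinates are pairwise independent and such that λ ≠ μ⊗μ⊗μ. -/
open MeasureTheory Filter ProbabilityTheory

namespace MixProof

set_option linter.unusedSectionVars false
set_option linter.unusedVariables false
set_option maxHeartbeats 1000000

open Set Topology
open scoped ENNReal NNReal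

variable {B : Type*} [Fintype B] [MeasurableSpace B] [DiscreteMeasurableSpace B]

/-- The symmetric block map recording coordinates in `[-k, k]`. -/
def blk (k : ℕ) : (ℤ → B) → (Fin (2*k+1) → B) := window (2*k) (-(k:ℤ))

lemma blk_apply (k : ℕ) (z : ℤ → B) (i : Fin (2*k+1)) : blk k z i = z (-(k:ℤ) + (i:ℕ)) := rfl

lemma measurable_blk (k : ℕ) : Measurable (blk (B := B) k) :=
  measurable_pi_lambda _ fun i => measurable_pi_apply _

/-- Restriction from level `m` to level `k ≤ m`. -/
def res (k m : ℕ) (h : k ≤ m) (w : Fin (2*m+1) → B) : Fin (2*k+1) → B :=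
  fun i => w ⟨(m - k) + (i : ℕ), by have := i.isLt; omega⟩

lemma res_blk {k m : ℕ} (h : k ≤ m) (z : ℤ → B) : res k m h (blk m z) = blk k z := by
  funext i
  show z _ = z _
  congr 1
  have := i.isLt
  push_cast [h]
  omega

lemma blk_preimage_res {k m : ℕ} (h : k ≤ m) (E : Set (Fin (2*k+1) → B)) :
    blk (B := B) k ⁻¹' E = blk m ⁻¹' (res k m h ⁻¹' E) := by
  ext z
  simp [Set.mem_preimage, res_blk h]

open scoped Classical in
lemma toReal_blk_sum (ρ : Measure (ℤ → B)) [IsFiniteMeasure ρ] (k : ℕ)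
    (E : Set (Fin (2*k+1) → B)) :
    (ρ (blk k ⁻¹' E)).toReal
      = ∑ w : Fin (2*k+1) → B, if w ∈ E then (ρ (blk k ⁻¹' {w})).toReal else 0 := by
  classical
  have hset : blk (B := B) k ⁻¹' E = ⋃ w ∈ Finset.univ.filter (· ∈ E), blk k ⁻¹' {w} := by
    ext z
    simp [Set.mem_preimage]
  rw [hset, measure_biUnion_finset ?_ ?_]
  · rw [ENNReal.toReal_sum (fun w _ => measure_ne_top _ _), Finset.sum_filter]
  · intro a _ b _ hab
    refine Set.disjoint_left.mpr fun z hza hzb => hab ?_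
    have h1 : blk k z = a := hza
    have h2 : blk k z = b := hzb
    rw [← h1, h2]
  · intro w _
    exact measurable_blk k (MeasurableSet.of_discrete)

/-- Coordinate preimages are cylinders. -/
lemma coord_eq_cyl (j : ℤ) (s : Set B) :
    (fun z : ℤ → B => z j) ⁻¹' s
      = blk j.natAbs ⁻¹' {w | w ⟨(j + (j.natAbs:ℤ)).toNat, by omega⟩ ∈ s} := by
  ext z
  simp only [Set.mem_preimage, Set.mem_setOf_eq, blk_apply]
  have : (-(j.natAbs:ℤ) + (((j + (j.natAbs:ℤ)).toNat : ℕ) : ℤ)) = j := by omega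
  rw [this]

lemma pi_eq_generateFrom_cyl :
    (MeasurableSpace.pi : MeasurableSpace (ℤ → B)) =
      .generateFrom {S : Set (ℤ → B) | ∃ k E, S = blk (B := B) k ⁻¹' E} := by
  apply le_antisymm
  · refine iSup_le fun j => ?_
    rintro t ⟨s, _, rfl⟩
    rw [coord_eq_cyl j s]
    exact MeasurableSpace.measurableSet_generateFrom ⟨_, _, rfl⟩
  · refine MeasurableSpace.generateFrom_le ?_
    rintro S ⟨k, E, rfl⟩
    exact measurable_blk k MeasurableSet.of_discrete

lemma isPiSystem_cyl :
    IsPiSystem {S : Set (ℤ → B) | ∃ k E, S = blk (B := B) k ⁻¹' E} := by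
  rintro _ ⟨k, E, rfl⟩ _ ⟨k', E', rfl⟩ -
  exact ⟨max k k', res k _ (le_max_left _ _) ⁻¹' E ∩ res k' _ (le_max_right _ _) ⁻¹' E', by
    rw [Set.preimage_inter, ← blk_preimage_res, ← blk_preimage_res]⟩

lemma isCountablySpanning_cyl :
    IsCountablySpanning {S : Set (ℤ → B) | ∃ k E, S = blk (B := B) k ⁻¹' E} :=
  ⟨fun _ => Set.univ, fun _ => ⟨0, Set.univ, by simp⟩, Set.iUnion_const _⟩

lemma ext_blk (ρ1 ρ2 : Measure (ℤ → B)) [IsProbabilityMeasure ρ1] [IsProbabilityMeasure ρ2]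
    (h : ∀ (k : ℕ) (E : Set (Fin (2*k+1) → B)), ρ1 (blk k ⁻¹' E) = ρ2 (blk k ⁻¹' E)) :
    ρ1 = ρ2 := by
  refine ext_of_generate_finite _ pi_eq_generateFrom_cyl isPiSystem_cyl ?_ (by simp)
  rintro S ⟨k, E, rfl⟩
  exact h k E

lemma ext_blk_prod {C : Type*} [Fintype C] [MeasurableSpace C] [DiscreteMeasurableSpace C]
    (ρ1 ρ2 : Measure ((ℤ → B) × (ℤ → C))) [IsProbabilityMeasure ρ1] [IsProbabilityMeasure ρ2]
    (h : ∀ (k : ℕ) (E : Set (Fin (2*k+1) → B)) (F : Set (Fin (2*k+1) → C)),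
        ρ1 ((blk k ⁻¹' E) ×ˢ (blk k ⁻¹' F)) = ρ2 ((blk k ⁻¹' E) ×ˢ (blk k ⁻¹' F))) :
    ρ1 = ρ2 := by
  refine ext_of_generate_finite
      (Set.image2 (· ×ˢ ·) {S : Set (ℤ → B) | ∃ k E, S = blk (B := B) k ⁻¹' E}
        {S : Set (ℤ → C) | ∃ k E, S = blk (B := C) k ⁻¹' E})
      ?_ (isPiSystem_cyl.prod isPiSystem_cyl) ?_ (by simp)
  · exact (generateFrom_eq_prod pi_eq_generateFrom_cyl.symm pi_eq_generateFrom_cyl.symm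
      isCountablySpanning_cyl isCountablySpanning_cyl).symm
  · rintro _ ⟨_, ⟨k, E, rfl⟩, _, ⟨k', F, rfl⟩, rfl⟩
    rw [blk_preimage_res (le_max_left k k') E, blk_preimage_res (le_max_right k k') F]
    exact h (max k k') _ _

open Set in
open scoped Classical in
lemma exists_limit_measure {B : Type*} [Fintype B] [MeasurableSpace B] [DiscreteMeasurableSpace B]
    (ν : ℕ → Measure (ℤ → B)) (hν : ∀ n, IsProbabilityMeasure (ν n)) :
    ∃ (ρ : Measure (ℤ → B)) (φ : ℕ → ℕ), IsProbabilityMeasure ρ ∧ StrictMono φ ∧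
      ∀ (k : ℕ) (E : Set (Fin (2*k+1) → B)),
        Tendsto (fun n => ((ν (φ n)) (blk k ⁻¹' E)).toReal) atTop
          (𝓝 ((ρ (blk k ⁻¹' E)).toReal)) := by
  letI : TopologicalSpace B := ⊥
  haveI : DiscreteTopology B := ⟨rfl⟩
  -- sequential extraction of limits of all elementary cylinder values
  set u : ℕ → (Σ k : ℕ, (Fin (2*k+1) → B)) → ℝ :=
    fun n i => ((ν n) (blk i.1 ⁻¹' {i.2})).toReal with hu
  have hmem : ∀ n, u n ∈ Set.univ.pi (fun _ : (Σ k : ℕ, (Fin (2*k+1) → B)) => Icc (0:ℝ) 1) := by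
    intro n i _
    haveI := hν n
    exact ⟨ENNReal.toReal_nonneg, by
      simpa using ENNReal.toReal_mono ENNReal.one_ne_top (prob_le_one (μ := ν n))⟩
  have hcomp : IsCompact (Set.univ.pi fun _ : (Σ k : ℕ, (Fin (2*k+1) → B)) => Icc (0:ℝ) 1) :=
    isCompact_univ_pi fun _ => isCompact_Icc
  obtain ⟨v, hvS, φ, hφ, hconv⟩ := hcomp.tendsto_subseq hmem
  have hcoord : ∀ i, Tendsto (fun n => u (φ n) i) atTop (𝓝 (v i)) :=
    fun i => tendsto_pi_nhds.mp hconv i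
  have hv0 : ∀ i, 0 ≤ v i := fun i => (hvS i (Set.mem_univ i)).1
  -- limit values of general cylinders
  set VV : ∀ k : ℕ, Set (Fin (2*k+1) → B) → ℝ :=
    fun k E => ∑ w : Fin (2*k+1) → B, if w ∈ E then v ⟨k, w⟩ else 0 with hVV
  have tendsto_VV : ∀ (k : ℕ) (E : Set (Fin (2*k+1) → B)),
      Tendsto (fun n => ((ν (φ n)) (blk k ⁻¹' E)).toReal) atTop (𝓝 (VV k E)) := by
    intro k E
    have hterm : ∀ n, ((ν (φ n)) (blk k ⁻¹' E)).toReal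
        = ∑ w : Fin (2*k+1) → B, if w ∈ E then u (φ n) ⟨k, w⟩ else 0 := by
      intro n
      haveI := hν (φ n)
      exact toReal_blk_sum (ν (φ n)) k E
    refine Tendsto.congr (fun n => (hterm n).symm) ?_
    refine tendsto_finset_sum _ fun w _ => ?_
    by_cases hw : w ∈ E
    · simpa [hw] using hcoord ⟨k, w⟩
    · simpa [hw] using tendsto_const_nhds
  have VV_nonneg : ∀ k E, 0 ≤ VV k E := by
    intro k E
    refine Finset.sum_nonneg fun w _ => ?_
    by_cases hw : w ∈ E <;> simp [hw, hv0]
  have VV_mono_of_subset : ∀ {k m : ℕ} {E F}, blk (B := B) k ⁻¹' E ⊆ blk m ⁻¹' F →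
      VV k E ≤ VV m F := by
    intro k m E F h
    refine le_of_tendsto_of_tendsto' (tendsto_VV k E) (tendsto_VV m F) fun n => ?_
    haveI := hν (φ n)
    exact ENNReal.toReal_mono (measure_ne_top _ _) (measure_mono h)
  have VV_eq_of_eq : ∀ {k m : ℕ} {E F}, blk (B := B) k ⁻¹' E = blk m ⁻¹' F →
      VV k E = VV m F := fun h =>
    le_antisymm (VV_mono_of_subset h.le) (VV_mono_of_subset h.ge)
  have VV_union_le : ∀ (k : ℕ) (E F : Set (Fin (2*k+1) → B)),
      VV k (E ∪ F) ≤ VV k E + VV k F := by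
    intro k E F
    rw [hVV, ← Finset.sum_add_distrib]
    refine Finset.sum_le_sum fun w _ => ?_
    by_cases hE : w ∈ E <;> by_cases hF : w ∈ F <;> simp [hE, hF, hv0]
  have VV_union_disjoint : ∀ (k : ℕ) (E F : Set (Fin (2*k+1) → B)), Disjoint E F →
      VV k (E ∪ F) = VV k E + VV k F := by
    intro k E F hdis
    rw [hVV, ← Finset.sum_add_distrib]
    refine Finset.sum_congr rfl fun w _ => ?_
    by_cases hE : w ∈ E
    · have hF : w ∉ F := fun hF => (Set.disjoint_left.mp hdis hE) hF
      simp [hE, hF]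
    · by_cases hF : w ∈ F <;> simp [hE, hF]
  have VV_univ : ∀ k : ℕ, VV k Set.univ = 1 := by
    intro k
    have h1 : Tendsto (fun n => ((ν (φ n)) (blk (B := B) k ⁻¹' Set.univ)).toReal)
        atTop (𝓝 1) := by
      refine Tendsto.congr' ?_ tendsto_const_nhds
      filter_upwards with n
      haveI := hν (φ n)
      simp
    exact tendsto_nhds_unique (tendsto_VV k Set.univ) h1
  -- the set function on covers
  set cset : Set (ℤ → B) → Set ℝ :=
    fun S => {r | ∃ k E, S ⊆ blk k ⁻¹' E ∧ r = VV k E} with hcset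
  have cset_ne : ∀ S, (cset S).Nonempty := by
    intro S
    exact ⟨VV 0 Set.univ, 0, Set.univ, by simp, rfl⟩
  have cset_bdd : ∀ S, BddBelow (cset S) := by
    intro S
    refine ⟨0, ?_⟩
    rintro r ⟨k, E, -, rfl⟩
    exact VV_nonneg _ _
  set contR : Set (ℤ → B) → ℝ := fun S => sInf (cset S) with hcontR
  have contR_le : ∀ (S : Set (ℤ → B)) k E, S ⊆ blk k ⁻¹' E → contR S ≤ VV k E :=
    fun S k E h => csInf_le (cset_bdd S) ⟨k, E, h, rfl⟩
  have le_contR : ∀ (x : ℝ) (S : Set (ℤ → B)),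
      (∀ k E, S ⊆ blk k ⁻¹' E → x ≤ VV k E) → x ≤ contR S := by
    intro x S h
    refine le_csInf (cset_ne S) ?_
    rintro r ⟨k, E, hs, rfl⟩
    exact h k E hs
  have contR_nonneg : ∀ S, 0 ≤ contR S :=
    fun S => le_contR 0 S fun k E _ => VV_nonneg _ _
  have contR_mono : ∀ S T : Set (ℤ → B), S ⊆ T → contR S ≤ contR T := by
    intro S T hST
    refine le_csInf (cset_ne T) ?_
    rintro r ⟨k, E, h, rfl⟩
    exact contR_le S k E (hST.trans h)
  have contR_cyl : ∀ k E, contR (blk (B := B) k ⁻¹' E) = VV k E := fun k E =>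
    le_antisymm (contR_le _ k E subset_rfl)
      (le_contR _ _ fun m F h => VV_mono_of_subset h)
  have contR_union_le : ∀ S T : Set (ℤ → B), contR (S ∪ T) ≤ contR S + contR T := by
    intro S T
    have key : ∀ r ∈ cset S, ∀ r' ∈ cset T, contR (S ∪ T) ≤ r + r' := by
      rintro r ⟨k, E, hS, rfl⟩ r' ⟨k', E', hT, rfl⟩
      have h1 : S ∪ T ⊆ blk (max k k') ⁻¹'
          (res k _ (le_max_left k k') ⁻¹' E ∪ res k' _ (le_max_right k k') ⁻¹' E') := by
        rw [Set.preimage_union, ← blk_preimage_res, ← blk_preimage_res]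
        exact Set.union_subset_union hS hT
      calc contR (S ∪ T) ≤ VV (max k k') (_ ∪ _) := contR_le _ _ _ h1
        _ ≤ VV (max k k') (res k _ (le_max_left k k') ⁻¹' E)
            + VV (max k k') (res k' _ (le_max_right k k') ⁻¹' E') := VV_union_le _ _ _
        _ = VV k E + VV k' E' := by
            rw [VV_eq_of_eq (blk_preimage_res (le_max_left k k') E).symm,
              VV_eq_of_eq (blk_preimage_res (le_max_right k k') E').symm]
    have h2 : ∀ r ∈ cset S, contR (S ∪ T) - r ≤ contR T := by
      intro r hr
      refine le_csInf (cset_ne T) fun r' hr' => ?_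
      have := key r hr r' hr'
      linarith
    have h3 : contR (S ∪ T) - contR T ≤ contR S := by
      refine le_csInf (cset_ne S) fun r hr => ?_
      have := h2 r hr
      linarith
    linarith
  -- separation of disjoint compact sets by a cylinder
  have separate : ∀ K1 K2 : Set (ℤ → B), IsClosed K1 → IsCompact K2 → Disjoint K1 K2 →
      ∃ k0 : ℕ, K1 ⊆ blk k0 ⁻¹' (blk k0 '' K1) ∧ K2 ∩ blk k0 ⁻¹' (blk k0 '' K1) = ∅ := by
    intro K1 K2 hK1 hK2 hdisj
    set W : ℕ → Set (ℤ → B) := fun k => blk k ⁻¹' (blk k '' K1) with hW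
    have Wmem : ∀ k, K1 ⊆ W k := fun k z hz => ⟨z, hz, rfl⟩
    have Wanti : ∀ k m : ℕ, k ≤ m → W m ⊆ W k := by
      intro k m h z hz
      obtain ⟨y, hy, hyz⟩ := hz
      exact ⟨y, hy, by rw [← res_blk h y, hyz, res_blk h]⟩
    have hWclosed : ∀ k, IsClosed (W k) := by
      intro k
      have : Continuous (blk (B := B) k) :=
        continuous_pi fun i => continuous_apply _
      exact (isClosed_discrete _).preimage this
    have hempty : K2 ∩ ⋂ k, W k = ∅ := by
      by_contra h
      obtain ⟨x, hxK2, hxW⟩ := Set.nonempty_iff_ne_empty.mpr h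
      simp only [Set.mem_iInter] at hxW
      choose y hyK1 hyblk using hxW
      have htend : Tendsto y atTop (𝓝 x) := by
        rw [tendsto_pi_nhds]
        intro j
        have hev : ∀ᶠ k in atTop, y k j = x j := by
          filter_upwards [eventually_ge_atTop j.natAbs] with k hk
          have h2 := congrFun (hyblk k) ⟨(j + (k:ℤ)).toNat, by omega⟩
          simp only [blk_apply] at h2
          rwa [show (-(k:ℤ) + (((j + (k:ℤ)).toNat : ℕ) : ℤ)) = j by omega] at h2
        exact Tendsto.congr' (hev.mono fun k hk => hk.symm) tendsto_const_nhds
      have hxK1 : x ∈ K1 := hK1.mem_of_tendsto htend (Eventually.of_forall hyK1)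
      exact Set.disjoint_left.mp hdisj hxK1 hxK2
    obtain ⟨t, ht⟩ := hK2.elim_finite_subfamily_closed W hWclosed hempty
    refine ⟨t.sup id, Wmem _, ?_⟩
    have hsub : K2 ∩ W (t.sup id) ⊆ K2 ∩ ⋂ k ∈ t, W k := by
      rintro x ⟨h2, hw⟩
      exact ⟨h2, Set.mem_iInter₂.mpr fun k hk => Wanti k _ (Finset.le_sup (f := id) hk) hw⟩
    exact Set.subset_empty_iff.mp (ht ▸ hsub)
  have contR_union_disjoint : ∀ K1 K2 : Set (ℤ → B), IsClosed K1 → IsCompact K2 →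
      Disjoint K1 K2 → contR K1 + contR K2 ≤ contR (K1 ∪ K2) := by
    intro K1 K2 hK1 hK2 hdisj
    obtain ⟨k0, hD1, hD2⟩ := separate K1 K2 hK1 hK2 hdisj
    refine le_contR _ _ fun m E hcov => ?_
    set M := max m k0 with hM
    set D : Set (Fin (2*M+1) → B) := res k0 M (le_max_right m k0) ⁻¹' (blk k0 '' K1) with hD
    set E' : Set (Fin (2*M+1) → B) := res m M (le_max_left m k0) ⁻¹' E with hE'
    have hDpre : blk (B := B) M ⁻¹' D = blk k0 ⁻¹' (blk k0 '' K1) :=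
      (blk_preimage_res (le_max_right m k0) _).symm
    have hEpre : blk (B := B) M ⁻¹' E' = blk m ⁻¹' E :=
      (blk_preimage_res (le_max_left m k0) _).symm
    have h1 : K1 ⊆ blk M ⁻¹' (E' ∩ D) := by
      rw [Set.preimage_inter, hDpre, hEpre]
      exact Set.subset_inter ((Set.subset_union_left).trans hcov) hD1
    have h2 : K2 ⊆ blk M ⁻¹' (E' \ D) := by
      rw [Set.preimage_diff, hDpre, hEpre]
      intro z hz
      refine ⟨hcov (Or.inr hz), fun hzD => ?_⟩
      have : z ∈ K2 ∩ blk k0 ⁻¹' (blk k0 '' K1) := ⟨hz, hzD⟩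
      rw [hD2] at this
      exact this
    calc contR K1 + contR K2 ≤ VV M (E' ∩ D) + VV M (E' \ D) :=
          add_le_add (contR_le _ _ _ h1) (contR_le _ _ _ h2)
      _ = VV M ((E' ∩ D) ∪ (E' \ D)) :=
          (VV_union_disjoint _ _ _ ((disjoint_sdiff_right).mono_left Set.inter_subset_right)).symm
      _ = VV M E' := by rw [Set.inter_union_diff]
      _ = VV m E := VV_eq_of_eq hEpre
  -- topological facts
  haveI : CompactSpace (ℤ → B) := inferInstance
  have cyl_open : ∀ (k : ℕ) (E : Set (Fin (2*k+1) → B)), IsOpen (blk k ⁻¹' E) := by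
    intro k E
    have : Continuous (blk (B := B) k) := continuous_pi fun i => continuous_apply _
    exact (isOpen_discrete _).preimage this
  have cyl_closed : ∀ (k : ℕ) (E : Set (Fin (2*k+1) → B)), IsClosed (blk k ⁻¹' E) := by
    intro k E
    have : Continuous (blk (B := B) k) := continuous_pi fun i => continuous_apply _
    exact (isClosed_discrete _).preimage this
  have cyl_compact : ∀ (k : ℕ) (E : Set (Fin (2*k+1) → B)), IsCompact (blk k ⁻¹' E) :=
    fun k E => (cyl_closed k E).isCompact
  -- the content
  set con : Content (ℤ → B) :=
    { toFun := fun K => Real.toNNReal (contR K)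
      mono' := fun K1 K2 h => Real.toNNReal_mono (contR_mono _ _ h)
      sup_disjoint' := by
        intro K1 K2 hdis hc1 hc2
        have heq : contR ((K1 : Set (ℤ → B)) ∪ (K2 : Set (ℤ → B)))
            = contR K1 + contR K2 :=
          le_antisymm (contR_union_le _ _) (contR_union_disjoint _ _ hc1 K2.2 hdis)
        show Real.toNNReal (contR ((K1 ⊔ K2 : TopologicalSpace.Compacts (ℤ → B)) : Set (ℤ → B)))
          = Real.toNNReal (contR K1) + Real.toNNReal (contR K2)
        rw [TopologicalSpace.Compacts.coe_sup, heq,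
          Real.toNNReal_add (contR_nonneg _) (contR_nonneg _)]
      sup_le' := by
        intro K1 K2
        show Real.toNNReal (contR ((K1 ⊔ K2 : TopologicalSpace.Compacts (ℤ → B)) : Set (ℤ → B)))
          ≤ Real.toNNReal (contR K1) + Real.toNNReal (contR K2)
        rw [TopologicalSpace.Compacts.coe_sup]
        refine le_trans (Real.toNNReal_mono (contR_union_le _ _)) ?_
        exact Real.toNNReal_add_le } with hcon
  have con_apply : ∀ K : TopologicalSpace.Compacts (ℤ → B),
      (con K : ℝ≥0∞) = ENNReal.ofReal (contR K) := fun K => rfl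
  -- regularity
  have hreg : con.ContentRegular := by
    intro K
    apply le_antisymm
    · refine le_iInf fun K' => le_iInf fun hK' => ?_
      rw [con_apply, con_apply]
      exact ENNReal.ofReal_le_ofReal (contR_mono _ _ (hK'.trans interior_subset))
    · refine ENNReal.le_of_forall_pos_le_add fun ε hε _ => ?_
      obtain ⟨r, hrmem, hrlt⟩ := Real.lt_sInf_add_pos (cset_ne (K : Set (ℤ → B)))
        (by exact_mod_cast hε : (0:ℝ) < (ε:ℝ))
      obtain ⟨k, E, hcov, rfl⟩ := hrmem
      set C : TopologicalSpace.Compacts (ℤ → B) := ⟨blk k ⁻¹' E, cyl_compact k E⟩ with hC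
      have hle : ⨅ (K' : TopologicalSpace.Compacts (ℤ → B))
          (_ : (K : Set (ℤ → B)) ⊆ interior (K' : Set (ℤ → B))), (con K' : ℝ≥0∞)
          ≤ (con C : ℝ≥0∞) := by
        refine iInf₂_le C ?_
        show (K : Set (ℤ → B)) ⊆ interior (blk k ⁻¹' E)
        rw [(cyl_open k E).interior_eq]
        exact hcov
      refine hle.trans ?_
      rw [con_apply]
      show ENNReal.ofReal (contR (blk k ⁻¹' E)) ≤ _
      calc ENNReal.ofReal (contR (blk k ⁻¹' E)) ≤ ENNReal.ofReal (VV k E) :=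
            ENNReal.ofReal_le_ofReal (by rw [contR_cyl])
        _ ≤ ENNReal.ofReal (contR (K : Set (ℤ → B)) + ε) := ENNReal.ofReal_le_ofReal hrlt.le
        _ = ENNReal.ofReal (contR (K : Set (ℤ → B))) + ENNReal.ofReal (ε : ℝ) :=
            ENNReal.ofReal_add (contR_nonneg _) (by positivity)
        _ = (con K : ℝ≥0∞) + (ε : ℝ≥0∞) := by rw [con_apply, ENNReal.ofReal_coe_nnreal]
  -- the measure
  haveI : SecondCountableTopology B := inferInstance
  haveI : BorelSpace (ℤ → B) := inferInstance
  set mm : Measure (ℤ → B) := con.measure with hmm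
  have hcylval : ∀ (k : ℕ) (E : Set (Fin (2*k+1) → B)),
      mm (blk k ⁻¹' E) = ENNReal.ofReal (VV k E) := by
    intro k E
    have h1 := MeasureTheory.Content.measure_eq_content_of_regular con hreg
      ⟨blk k ⁻¹' E, cyl_compact k E⟩
    have h2 : mm (blk k ⁻¹' E) = ENNReal.ofReal (contR (blk k ⁻¹' E)) := h1
    rw [h2, contR_cyl]
  have hprob : IsProbabilityMeasure mm := by
    constructor
    have huniv : (Set.univ : Set (ℤ → B)) = blk (B := B) 0 ⁻¹' Set.univ := by simp
    rw [huniv, hcylval, VV_univ, ENNReal.ofReal_one]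
  refine ⟨mm, φ, hprob, hφ, ?_⟩
  intro k E
  rw [hcylval, ENNReal.toReal_ofReal (VV_nonneg k E)]
  exact tendsto_VV k E

section Stationary

variable {A : Type*} [Fintype A] [MeasurableSpace A] [DiscreteMeasurableSpace A]

lemma measurable_shiftT : Measurable (shiftT A) :=
  measurable_pi_lambda _ fun i => measurable_pi_apply _

lemma shiftT_iterate (m : ℕ) (x : ℤ → A) :
    (shiftT A)^[m] x = fun i => x (i + (m:ℤ)) := by
  induction m with
  | zero => simp
  | succ m ih =>
    rw [Function.iterate_succ_apply', ih]
    funext i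
    show x (i + 1 + (m:ℤ)) = x (i + ((m:ℕ)+1 : ℕ))
    congr 1
    push_cast
    ring

lemma measurable_window (ℓ : ℕ) (a : ℤ) : Measurable (window (A := A) ℓ a) :=
  measurable_pi_lambda _ fun i => measurable_pi_apply _

lemma window_set_measurable (ℓ : ℕ) (a : ℤ) (F : Set (Fin (ℓ+1) → A)) :
    MeasurableSet {x : ℤ → A | window ℓ a x ∈ F} :=
  measurable_window ℓ a MeasurableSet.of_discrete

variable (μ : Measure (ℤ → A))

lemma map_shiftT_iterate (hstat : μ.map (shiftT A) = μ) (m : ℕ) : μ.map ((shiftT A)^[m]) = μ := by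
  induction m with
  | zero => simp
  | succ m ih =>
    rw [Function.iterate_succ, ← Measure.map_map (measurable_shiftT.iterate m) measurable_shiftT,
      hstat, ih]

lemma meas_shift_preimage (hstat : μ.map (shiftT A) = μ) (m : ℕ) (S : Set (ℤ → A)) (hS : MeasurableSet S) :
    μ ((fun x : ℤ → A => fun i => x (i + (m:ℤ))) ⁻¹' S) = μ S := by
  have h1 : (fun x : ℤ → A => fun i => x (i + (m:ℤ))) = (shiftT A)^[m] := by
    funext x
    rw [shiftT_iterate]
  rw [h1, ← Measure.map_apply (measurable_shiftT.iterate m) hS, map_shiftT_iterate μ hstat]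

lemma window_comp_shift (ℓ : ℕ) (a t : ℤ) (x : ℤ → A) :
    window ℓ a (fun i => x (i + t)) = window ℓ (a + t) x := by
  funext i
  show x _ = x _
  congr 1
  ring

lemma window_pair_eq (hstat : μ.map (shiftT A) = μ) (L : ℕ) (F1 F2 : Set (Fin (L+1) → A)) (a b a' b' : ℤ)
    (h : b + a' = b' + a) :
    μ {x | window L a x ∈ F1 ∧ window L b x ∈ F2}
      = μ {x | window L a' x ∈ F1 ∧ window L b' x ∈ F2} := by
  have hnat : ∀ (a b : ℤ) (m : ℕ),
      μ {x | window L (a + (m:ℤ)) x ∈ F1 ∧ window L (b + (m:ℤ)) x ∈ F2}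
        = μ {x | window L a x ∈ F1 ∧ window L b x ∈ F2} := by
    intro a b m
    have hset : {x : ℤ → A | window L (a + (m:ℤ)) x ∈ F1 ∧ window L (b + (m:ℤ)) x ∈ F2}
        = (fun x : ℤ → A => fun i => x (i + (m:ℤ))) ⁻¹'
            {x : ℤ → A | window L a x ∈ F1 ∧ window L b x ∈ F2} := by
      ext x
      simp only [Set.mem_preimage, Set.mem_setOf_eq, window_comp_shift]
    have hms : MeasurableSet {x : ℤ → A | window L a x ∈ F1 ∧ window L b x ∈ F2} :=
      ((window_set_measurable L a F1)).inter (window_set_measurable L b F2)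
    rw [hset, meas_shift_preimage μ hstat m _ hms]
  rcases le_total a a' with hle | hle
  · have e1 : a' = a + ((a' - a).toNat : ℤ) := by omega
    have e2 : b' = b + ((a' - a).toNat : ℤ) := by omega
    rw [e1, e2, hnat]
  · have e1 : a = a' + ((a - a').toNat : ℤ) := by omega
    have e2 : b = b' + ((a - a').toNat : ℤ) := by omega
    conv_lhs => rw [e1, e2]
    rw [hnat]

lemma window_single_eq (hstat : μ.map (shiftT A) = μ) (L : ℕ) (F1 : Set (Fin (L+1) → A)) (a a' : ℤ) :
    μ {x | window L a x ∈ F1} = μ {x | window L a' x ∈ F1} := by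
  have h := window_pair_eq μ hstat L F1 Set.univ a a a' a' (by ring)
  simpa using h

end Stationary
end MixProof

open scoped Topology ENNReal in
set_option maxHeartbeats 2000000 in
/-- **Proposition (2-fold mixing without 3-fold mixing yields a pairwise independent
self-joining).**  If `μ` is a stationary process on `A^ℤ` (with `A` a finite alphabet)
which is 2-fold mixing but not 3-fold mixing, then `μ` has a 3-fold self-joining `lam`
with pairwise independent coordinates which is different from the product measure
`μ ⊗ μ ⊗ μ`. -/
theorem mixing2_not_mixing3_exists_pairwise_indep_joining
    {A : Type*} [Fintype A] [MeasurableSpace A] [DiscreteMeasurableSpace A]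
    (μ : Measure (ℤ → A)) [IsProbabilityMeasure μ]
    (hstat : μ.map (shiftT A) = μ)
    (h2 : Mixing2 μ) (h3 : ¬ Mixing3 μ) :
    ∃ lam : Measure ((ℤ → A) × (ℤ → A) × (ℤ → A)),
      IsSelfJoining3 μ lam ∧ PairwiseIndepCoords μ lam ∧ lam ≠ μ.prod (μ.prod μ) := by
  classical
  simp only [Mixing3] at h3
  push_neg at h3
  obtain ⟨ℓ, E1, E2, E3, hnot⟩ := h3
  set f : ℕ × ℕ → ℝ := fun pq =>
    (μ {x | window ℓ 0 x ∈ E1 ∧ window ℓ (pq.1:ℤ) x ∈ E2 ∧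
        window ℓ ((pq.1:ℤ) + (pq.2:ℤ)) x ∈ E3}).toReal -
      (μ {x | window ℓ 0 x ∈ E1}).toReal * (μ {x | window ℓ 0 x ∈ E2}).toReal *
        (μ {x | window ℓ 0 x ∈ E3}).toReal with hf
  obtain ⟨ε, hε, hfreq⟩ : ∃ ε > 0, ∃ᶠ pq in (atTop ×ˢ atTop : Filter (ℕ × ℕ)),
      ε ≤ |f pq| := by
    by_contra hcon
    push_neg at hcon
    apply hnot
    rw [Metric.tendsto_nhds]
    intro ε hε
    have h1 := hcon ε hε
    refine h1.mono fun x hx => ?_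
    rw [Real.dist_eq, sub_zero]
    exact hx
  have hseq : ∀ n : ℕ, ∃ pq : ℕ × ℕ, n ≤ pq.1 ∧ n ≤ pq.2 ∧ ε ≤ |f pq| := by
    intro n
    obtain ⟨pq, hmem, hpred⟩ := Filter.frequently_iff.mp hfreq
      (Filter.prod_mem_prod (Filter.Ici_mem_atTop n) (Filter.Ici_mem_atTop n))
    exact ⟨pq, hmem.1, hmem.2, hpred⟩
  choose pqf hp1 hq1 hfge using hseq
  set p : ℕ → ℕ := fun n => (pqf n).1 with hpdef
  set q : ℕ → ℕ := fun n => (pqf n).2 with hqdef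
  -- the joint distribution of (x, T^p x, T^{p+q} x)
  set jm : ℕ → (ℤ → A) → (ℤ → A × A × A) := fun n x => fun i =>
    (x i, x (i + (p n : ℤ)), x (i + (p n : ℤ) + (q n : ℤ))) with hjm
  have hjm_meas : ∀ n, Measurable (jm n) := by
    intro n
    refine measurable_pi_lambda _ fun i => ?_
    exact (measurable_pi_apply _).prodMk
      ((measurable_pi_apply _).prodMk (measurable_pi_apply _))
  set ν : ℕ → Measure (ℤ → A × A × A) := fun n => μ.map (jm n) with hνdef
  have hνprob : ∀ n, IsProbabilityMeasure (ν n) :=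
    fun n => Measure.isProbabilityMeasure_map (hjm_meas n).aemeasurable
  obtain ⟨ρ, φ, hρprob, hφ, hρt⟩ := MixProof.exists_limit_measure ν hνprob
  haveI : IsProbabilityMeasure ρ := hρprob
  -- projections
  set pr1 : (ℤ → A × A × A) → (ℤ → A) := fun z i => (z i).1 with hpr1
  set pr2 : (ℤ → A × A × A) → (ℤ → A) := fun z i => (z i).2.1 with hpr2
  set pr3 : (ℤ → A × A × A) → (ℤ → A) := fun z i => (z i).2.2 with hpr3
  have hpr1m : Measurable pr1 :=
    measurable_pi_lambda _ fun i => measurable_fst.comp (measurable_pi_apply _)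
  have hpr2m : Measurable pr2 :=
    measurable_pi_lambda _ fun i =>
      (measurable_fst.comp measurable_snd).comp (measurable_pi_apply _)
  have hpr3m : Measurable pr3 :=
    measurable_pi_lambda _ fun i =>
      (measurable_snd.comp measurable_snd).comp (measurable_pi_apply _)
  set eF : (ℤ → A × A × A) → (ℤ → A) × (ℤ → A) × (ℤ → A) :=
    fun z => (pr1 z, pr2 z, pr3 z) with heF
  have heFm : Measurable eF := hpr1m.prodMk (hpr2m.prodMk hpr3m)
  set lam : Measure ((ℤ → A) × (ℤ → A) × (ℤ → A)) := ρ.map eF with hlam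
  haveI : IsProbabilityMeasure lam := Measure.isProbabilityMeasure_map heFm.aemeasurable
  -- generic helpers
  have hcylm : ∀ (k : ℕ) (G : Set (Fin (2*k+1) → A × A × A)),
      MeasurableSet (MixProof.blk k ⁻¹' G) :=
    fun k G => MixProof.measurable_blk k MeasurableSet.of_discrete
  have hcylmA : ∀ (k : ℕ) (G : Set (Fin (2*k+1) → A)),
      MeasurableSet (MixProof.blk k ⁻¹' G) :=
    fun k G => MixProof.measurable_blk k MeasurableSet.of_discrete
  have hval : ∀ (k : ℕ) (G : Set (Fin (2*k+1) → A × A × A)) (c : ℝ),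
      Tendsto (fun n => ((ν (φ n)) (MixProof.blk k ⁻¹' G)).toReal) atTop (𝓝 c) →
      ρ (MixProof.blk k ⁻¹' G) = ENNReal.ofReal c := by
    intro k G c hc
    have h1 := tendsto_nhds_unique (hρt k G) hc
    rw [← h1, ENNReal.ofReal_toReal (measure_ne_top ρ _)]
  have hνap : ∀ (n : ℕ) (k : ℕ) (G : Set (Fin (2*k+1) → A × A × A)),
      (ν n) (MixProof.blk k ⁻¹' G) = μ ((jm n) ⁻¹' (MixProof.blk k ⁻¹' G)) :=
    fun n k G => Measure.map_apply (hjm_meas n) (hcylm k G)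
  -- tendsto to infinity of p, q, p+q along φ
  have hpφ : Tendsto (fun n => p (φ n)) atTop atTop :=
    tendsto_atTop_mono (fun n => le_trans hφ.le_apply (hp1 (φ n))) tendsto_id
  have hqφ : Tendsto (fun n => q (φ n)) atTop atTop :=
    tendsto_atTop_mono (fun n => le_trans hφ.le_apply (hq1 (φ n))) tendsto_id
  have hpqφ : Tendsto (fun n => p (φ n) + q (φ n)) atTop atTop :=
    tendsto_atTop_mono (fun n => le_trans hφ.le_apply
      (le_trans (hp1 (φ n)) (Nat.le_add_right _ _))) tendsto_id
  -- single marginals of ρ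
  have hmarg1 : ρ.map pr1 = μ := by
    haveI : IsProbabilityMeasure (ρ.map pr1) := Measure.isProbabilityMeasure_map hpr1m.aemeasurable
    apply MixProof.ext_blk
    intro k F
    rw [Measure.map_apply hpr1m (hcylmA k F)]
    have hG1 : pr1 ⁻¹' (MixProof.blk k ⁻¹' F)
        = MixProof.blk k ⁻¹' {w : Fin (2*k+1) → A × A × A | (fun i => (w i).1) ∈ F} := rfl
    rw [hG1]
    have hlim : Tendsto (fun n => ((ν (φ n)) (MixProof.blk k ⁻¹'
        {w : Fin (2*k+1) → A × A × A | (fun i => (w i).1) ∈ F})).toReal) atTop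
        (𝓝 ((μ (MixProof.blk k ⁻¹' F)).toReal)) := by
      refine Tendsto.congr' ?_ tendsto_const_nhds
      filter_upwards with n
      rw [hνap (φ n) k _]
      rfl
    rw [hval k _ _ hlim, ENNReal.ofReal_toReal (measure_ne_top μ _)]
  have hmarg2 : ρ.map pr2 = μ := by
    haveI : IsProbabilityMeasure (ρ.map pr2) := Measure.isProbabilityMeasure_map hpr2m.aemeasurable
    apply MixProof.ext_blk
    intro k F
    rw [Measure.map_apply hpr2m (hcylmA k F)]
    have hG2 : pr2 ⁻¹' (MixProof.blk k ⁻¹' F)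
        = MixProof.blk k ⁻¹' {w : Fin (2*k+1) → A × A × A | (fun i => (w i).2.1) ∈ F} := rfl
    rw [hG2]
    have hlim : Tendsto (fun n => ((ν (φ n)) (MixProof.blk k ⁻¹'
        {w : Fin (2*k+1) → A × A × A | (fun i => (w i).2.1) ∈ F})).toReal) atTop
        (𝓝 ((μ (MixProof.blk k ⁻¹' F)).toReal)) := by
      refine Tendsto.congr' ?_ tendsto_const_nhds
      filter_upwards with n
      rw [hνap (φ n) k _]
      have hJ : (jm (φ n)) ⁻¹' (MixProof.blk k ⁻¹'
          {w : Fin (2*k+1) → A × A × A | (fun i => (w i).2.1) ∈ F})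
          = {x : ℤ → A | window (2*k) (-(k:ℤ) + (p (φ n) : ℤ)) x ∈ F} := by
        ext x
        simp only [Set.mem_preimage, Set.mem_setOf_eq]
        have hfx : (fun i : Fin (2*k+1) => ((MixProof.blk k (jm (φ n) x)) i).2.1)
            = window (2*k) (-(k:ℤ) + (p (φ n) : ℤ)) x := by
          funext i
          show x _ = x _
          congr 1
          ring
        rw [hfx]
      rw [hJ, MixProof.window_single_eq μ hstat (2*k) F (-(k:ℤ) + (p (φ n) : ℤ)) (-(k:ℤ))]
      rfl
    rw [hval k _ _ hlim, ENNReal.ofReal_toReal (measure_ne_top μ _)]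
  have hmarg3 : ρ.map pr3 = μ := by
    haveI : IsProbabilityMeasure (ρ.map pr3) := Measure.isProbabilityMeasure_map hpr3m.aemeasurable
    apply MixProof.ext_blk
    intro k F
    rw [Measure.map_apply hpr3m (hcylmA k F)]
    have hG3' : pr3 ⁻¹' (MixProof.blk k ⁻¹' F)
        = MixProof.blk k ⁻¹' {w : Fin (2*k+1) → A × A × A | (fun i => (w i).2.2) ∈ F} := rfl
    rw [hG3']
    have hlim : Tendsto (fun n => ((ν (φ n)) (MixProof.blk k ⁻¹'
        {w : Fin (2*k+1) → A × A × A | (fun i => (w i).2.2) ∈ F})).toReal) atTop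
        (𝓝 ((μ (MixProof.blk k ⁻¹' F)).toReal)) := by
      refine Tendsto.congr' ?_ tendsto_const_nhds
      filter_upwards with n
      rw [hνap (φ n) k _]
      have hJ : (jm (φ n)) ⁻¹' (MixProof.blk k ⁻¹'
          {w : Fin (2*k+1) → A × A × A | (fun i => (w i).2.2) ∈ F})
          = {x : ℤ → A | window (2*k) (-(k:ℤ) + (p (φ n) : ℤ) + (q (φ n) : ℤ)) x ∈ F} := by
        ext x
        simp only [Set.mem_preimage, Set.mem_setOf_eq]
        have hfx : (fun i : Fin (2*k+1) => ((MixProof.blk k (jm (φ n) x)) i).2.2)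
            = window (2*k) (-(k:ℤ) + (p (φ n) : ℤ) + (q (φ n) : ℤ)) x := by
          funext i
          show x _ = x _
          congr 1
          ring
        rw [hfx]
      rw [hJ, MixProof.window_single_eq μ hstat (2*k) F
        (-(k:ℤ) + (p (φ n) : ℤ) + (q (φ n) : ℤ)) (-(k:ℤ))]
      rfl
    rw [hval k _ _ hlim, ENNReal.ofReal_toReal (measure_ne_top μ _)]
  -- generic pairwise-independence argument
  have hpairgen : ∀ (g : (ℤ → A × A × A) → (ℤ → A) × (ℤ → A)), Measurable g →
      ∀ (r : ℕ → ℕ), Tendsto (fun n => r (φ n)) atTop atTop →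
      (∀ (k : ℕ) (E F : Set (Fin (2*k+1) → A)), ∃ G : Set (Fin (2*k+1) → A × A × A),
        g ⁻¹' ((MixProof.blk k ⁻¹' E) ×ˢ (MixProof.blk k ⁻¹' F)) = MixProof.blk k ⁻¹' G) →
      (∀ (n : ℕ) (k : ℕ) (E F : Set (Fin (2*k+1) → A)),
        μ ((jm (φ n)) ⁻¹' (g ⁻¹' ((MixProof.blk k ⁻¹' E) ×ˢ (MixProof.blk k ⁻¹' F))))
          = μ {x : ℤ → A | window (2*k) 0 x ∈ E ∧ window (2*k) ((r (φ n) : ℕ) : ℤ) x ∈ F}) →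
      ρ.map g = μ.prod μ := by
    intro g hg r hr hG hsets
    haveI : IsProbabilityMeasure (ρ.map g) := Measure.isProbabilityMeasure_map hg.aemeasurable
    apply MixProof.ext_blk_prod
    intro k E F
    rw [Measure.map_apply hg ((hcylmA k E).prod (hcylmA k F))]
    obtain ⟨G, hGeq⟩ := hG k E F
    rw [hGeq]
    have hμlim : Tendsto (fun n => (μ {x : ℤ → A | window (2*k) 0 x ∈ E ∧
        window (2*k) ((r (φ n) : ℕ) : ℤ) x ∈ F}).toReal) atTop
        (𝓝 ((μ {x : ℤ → A | window (2*k) 0 x ∈ E}).toReal *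
          (μ {x : ℤ → A | window (2*k) 0 x ∈ F}).toReal)) := by
      have h := (h2 (2*k) E F).comp hr
      have h' := h.add (tendsto_const_nhds
        (x := (μ {x : ℤ → A | window (2*k) 0 x ∈ E}).toReal *
          (μ {x : ℤ → A | window (2*k) 0 x ∈ F}).toReal))
      simpa [Function.comp] using h'
    have hlim : Tendsto (fun n => ((ν (φ n)) (MixProof.blk k ⁻¹' G)).toReal) atTop
        (𝓝 ((μ {x : ℤ → A | window (2*k) 0 x ∈ E}).toReal *
          (μ {x : ℤ → A | window (2*k) 0 x ∈ F}).toReal)) := by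
      refine Tendsto.congr' ?_ hμlim
      filter_upwards with n
      rw [hνap (φ n) k G, ← hGeq, hsets n k E F]
    rw [hval k G _ hlim, Measure.prod_prod]
    have heq1 : μ (MixProof.blk k ⁻¹' E) = μ {x : ℤ → A | window (2*k) 0 x ∈ E} :=
      MixProof.window_single_eq μ hstat (2*k) E (-(k:ℤ)) 0
    have heq2 : μ (MixProof.blk k ⁻¹' F) = μ {x : ℤ → A | window (2*k) 0 x ∈ F} :=
      MixProof.window_single_eq μ hstat (2*k) F (-(k:ℤ)) 0
    rw [heq1, heq2, ← ENNReal.toReal_mul,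
      ENNReal.ofReal_toReal (ENNReal.mul_ne_top (measure_ne_top μ _) (measure_ne_top μ _))]
  -- the three pairwise marginals
  have hp12 : ρ.map (fun z => (pr1 z, pr2 z)) = μ.prod μ := by
    refine hpairgen _ (hpr1m.prodMk hpr2m) p hpφ
      (fun k E F => ⟨{w : Fin (2*k+1) → A × A × A |
        (fun i => (w i).1) ∈ E ∧ (fun i => (w i).2.1) ∈ F}, rfl⟩) ?_
    intro n k E F
    have hs : (jm (φ n)) ⁻¹' ((fun z => (pr1 z, pr2 z)) ⁻¹'
        ((MixProof.blk k ⁻¹' E) ×ˢ (MixProof.blk k ⁻¹' F)))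
        = {x : ℤ → A | window (2*k) (-(k:ℤ)) x ∈ E ∧
            window (2*k) (-(k:ℤ) + (p (φ n) : ℤ)) x ∈ F} := by
      ext x
      change (MixProof.blk k (pr1 (jm (φ n) x)) ∈ E ∧
        MixProof.blk k (pr2 (jm (φ n) x)) ∈ F) ↔ _
      have hfx : MixProof.blk k (pr2 (jm (φ n) x))
          = window (2*k) (-(k:ℤ) + (p (φ n) : ℤ)) x := by
        funext i
        show x _ = x _
        congr 1
        ring
      rw [hfx]
      exact Iff.rfl
    rw [hs]
    exact MixProof.window_pair_eq μ hstat (2*k) E F (-(k:ℤ)) (-(k:ℤ) + (p (φ n) : ℤ))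
      0 ((p (φ n) : ℕ) : ℤ) (by ring)
  have hp13 : ρ.map (fun z => (pr1 z, pr3 z)) = μ.prod μ := by
    refine hpairgen _ (hpr1m.prodMk hpr3m) (fun n => p n + q n) hpqφ
      (fun k E F => ⟨{w : Fin (2*k+1) → A × A × A |
        (fun i => (w i).1) ∈ E ∧ (fun i => (w i).2.2) ∈ F}, rfl⟩) ?_
    intro n k E F
    have hs : (jm (φ n)) ⁻¹' ((fun z => (pr1 z, pr3 z)) ⁻¹'
        ((MixProof.blk k ⁻¹' E) ×ˢ (MixProof.blk k ⁻¹' F)))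
        = {x : ℤ → A | window (2*k) (-(k:ℤ)) x ∈ E ∧
            window (2*k) (-(k:ℤ) + (p (φ n) : ℤ) + (q (φ n) : ℤ)) x ∈ F} := by
      ext x
      change (MixProof.blk k (pr1 (jm (φ n) x)) ∈ E ∧
        MixProof.blk k (pr3 (jm (φ n) x)) ∈ F) ↔ _
      have hfx : MixProof.blk k (pr3 (jm (φ n) x))
          = window (2*k) (-(k:ℤ) + (p (φ n) : ℤ) + (q (φ n) : ℤ)) x := by
        funext i
        show x _ = x _
        congr 1
        ring
      rw [hfx]
      exact Iff.rfl
    rw [hs]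
    exact MixProof.window_pair_eq μ hstat (2*k) E F (-(k:ℤ))
      (-(k:ℤ) + (p (φ n) : ℤ) + (q (φ n) : ℤ)) 0 ((p (φ n) + q (φ n) : ℕ) : ℤ)
      (by push_cast; ring)
  have hp23 : ρ.map (fun z => (pr2 z, pr3 z)) = μ.prod μ := by
    refine hpairgen _ (hpr2m.prodMk hpr3m) q hqφ
      (fun k E F => ⟨{w : Fin (2*k+1) → A × A × A |
        (fun i => (w i).2.1) ∈ E ∧ (fun i => (w i).2.2) ∈ F}, rfl⟩) ?_
    intro n k E F
    have hs : (jm (φ n)) ⁻¹' ((fun z => (pr2 z, pr3 z)) ⁻¹'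
        ((MixProof.blk k ⁻¹' E) ×ˢ (MixProof.blk k ⁻¹' F)))
        = {x : ℤ → A | window (2*k) (-(k:ℤ) + (p (φ n) : ℤ)) x ∈ E ∧
            window (2*k) (-(k:ℤ) + (p (φ n) : ℤ) + (q (φ n) : ℤ)) x ∈ F} := by
      ext x
      change (MixProof.blk k (pr2 (jm (φ n) x)) ∈ E ∧
        MixProof.blk k (pr3 (jm (φ n) x)) ∈ F) ↔ _
      have hfx2 : MixProof.blk k (pr2 (jm (φ n) x))
          = window (2*k) (-(k:ℤ) + (p (φ n) : ℤ)) x := by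
        funext i
        show x _ = x _
        congr 1
        ring
      have hfx3 : MixProof.blk k (pr3 (jm (φ n) x))
          = window (2*k) (-(k:ℤ) + (p (φ n) : ℤ) + (q (φ n) : ℤ)) x := by
        funext i
        show x _ = x _
        congr 1
        ring
      rw [hfx2, hfx3]
      exact Iff.rfl
    rw [hs]
    exact MixProof.window_pair_eq μ hstat (2*k) E F (-(k:ℤ) + (p (φ n) : ℤ))
      (-(k:ℤ) + (p (φ n) : ℤ) + (q (φ n) : ℤ)) 0 ((q (φ n) : ℕ) : ℤ) (by ring)
  -- invariance under the shift
  have hshiftBm : Measurable (shiftT (A × A × A)) := MixProof.measurable_shiftT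
  have hshiftAm : Measurable (shiftT A) := MixProof.measurable_shiftT
  have hinv_n : ∀ n, (ν n).map (shiftT (A × A × A)) = ν n := by
    intro n
    have h0 : (ν n).map (shiftT (A × A × A)) = (μ.map (jm n)).map (shiftT (A × A × A)) := rfl
    rw [h0, Measure.map_map hshiftBm (hjm_meas n)]
    have hcomp : (shiftT (A × A × A)) ∘ (jm n) = (jm n) ∘ (shiftT A) := by
      funext x
      funext i
      show jm n x (i + 1) = jm n (shiftT A x) i
      simp only [hjm, shiftT]
      ring_nf
    rw [hcomp, ← Measure.map_map (hjm_meas n) hshiftAm, hstat]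
  have hinvρ : ρ.map (shiftT (A × A × A)) = ρ := by
    haveI : IsProbabilityMeasure (ρ.map (shiftT (A × A × A))) :=
      Measure.isProbabilityMeasure_map hshiftBm.aemeasurable
    apply MixProof.ext_blk
    intro k E
    rw [Measure.map_apply hshiftBm (hcylm k E)]
    set E' : Set (Fin (2*(k+1)+1) → A × A × A) :=
      {w | (fun i : Fin (2*k+1) => w ⟨(i:ℕ)+2, by have := i.isLt; omega⟩) ∈ E} with hE'
    have hsetE : shiftT (A × A × A) ⁻¹' (MixProof.blk k ⁻¹' E)
        = MixProof.blk (k+1) ⁻¹' E' := by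
      ext z
      change MixProof.blk k (shiftT (A × A × A) z) ∈ E ↔
        (fun i : Fin (2*k+1) =>
          MixProof.blk (k+1) z ⟨(i:ℕ)+2, by have := i.isLt; omega⟩) ∈ E
      have hfz : (fun i : Fin (2*k+1) =>
          MixProof.blk (k+1) z ⟨(i:ℕ)+2, by have := i.isLt; omega⟩)
          = MixProof.blk k (shiftT (A × A × A) z) := by
        funext i
        show z _ = z _
        congr 1
        push_cast
        ring
      rw [hfz]
    rw [hsetE]
    have hterm : ∀ n, ((ν (φ n)) (MixProof.blk (k+1) ⁻¹' E')).toReal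
        = ((ν (φ n)) (MixProof.blk k ⁻¹' E)).toReal := by
      intro n
      rw [← hsetE]
      conv_rhs => rw [← hinv_n (φ n)]
      rw [Measure.map_apply hshiftBm (hcylm k E)]
    have htr : (ρ (MixProof.blk (k+1) ⁻¹' E')).toReal = (ρ (MixProof.blk k ⁻¹' E)).toReal :=
      tendsto_nhds_unique ((hρt (k+1) E').congr hterm) (hρt k E)
    exact (ENNReal.toReal_eq_toReal_iff' (measure_ne_top ρ _) (measure_ne_top ρ _)).mp htr
  -- the distinguishing set showing lam is not the product
  set S1 : Set (ℤ → A) := {x | window ℓ 0 x ∈ E1} with hS1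
  set S2 : Set (ℤ → A) := {x | window ℓ 0 x ∈ E2} with hS2
  set S3 : Set (ℤ → A) := {x | window ℓ 0 x ∈ E3} with hS3
  set G3 : Set (Fin (2*ℓ+1) → A × A × A) :=
    {w | (fun i : Fin (ℓ+1) => (w ⟨(i:ℕ)+ℓ, by have := i.isLt; omega⟩).1) ∈ E1 ∧
      (fun i : Fin (ℓ+1) => (w ⟨(i:ℕ)+ℓ, by have := i.isLt; omega⟩).2.1) ∈ E2 ∧
      (fun i : Fin (ℓ+1) => (w ⟨(i:ℕ)+ℓ, by have := i.isLt; omega⟩).2.2) ∈ E3} with hG3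
  have hmeasS : MeasurableSet (S1 ×ˢ (S2 ×ˢ S3)) :=
    (MixProof.window_set_measurable ℓ 0 E1).prod
      ((MixProof.window_set_measurable ℓ 0 E2).prod (MixProof.window_set_measurable ℓ 0 E3))
  have hpre : eF ⁻¹' (S1 ×ˢ (S2 ×ˢ S3)) = MixProof.blk ℓ ⁻¹' G3 := by
    ext z
    change (window ℓ 0 (pr1 z) ∈ E1 ∧ window ℓ 0 (pr2 z) ∈ E2 ∧ window ℓ 0 (pr3 z) ∈ E3) ↔
      ((fun i : Fin (ℓ+1) =>
          (MixProof.blk ℓ z ⟨(i:ℕ)+ℓ, by have := i.isLt; omega⟩).1) ∈ E1 ∧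
        (fun i : Fin (ℓ+1) =>
          (MixProof.blk ℓ z ⟨(i:ℕ)+ℓ, by have := i.isLt; omega⟩).2.1) ∈ E2 ∧
        (fun i : Fin (ℓ+1) =>
          (MixProof.blk ℓ z ⟨(i:ℕ)+ℓ, by have := i.isLt; omega⟩).2.2) ∈ E3)
    have c1 : (fun i : Fin (ℓ+1) =>
        (MixProof.blk ℓ z ⟨(i:ℕ)+ℓ, by have := i.isLt; omega⟩).1) = window ℓ 0 (pr1 z) := by
      funext i
      show (z _).1 = (z _).1
      congr 2
      push_cast
      ring
    have c2 : (fun i : Fin (ℓ+1) =>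
        (MixProof.blk ℓ z ⟨(i:ℕ)+ℓ, by have := i.isLt; omega⟩).2.1) = window ℓ 0 (pr2 z) := by
      funext i
      show (z _).2.1 = (z _).2.1
      congr 2
      push_cast
      ring
    have c3 : (fun i : Fin (ℓ+1) =>
        (MixProof.blk ℓ z ⟨(i:ℕ)+ℓ, by have := i.isLt; omega⟩).2.2) = window ℓ 0 (pr3 z) := by
      funext i
      show (z _).2.2 = (z _).2.2
      congr 2
      push_cast
      ring
    rw [c1, c2, c3]
  have hlamS : lam (S1 ×ˢ (S2 ×ˢ S3)) = ρ (MixProof.blk ℓ ⁻¹' G3) := by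
    rw [hlam, Measure.map_apply heFm hmeasS, hpre]
  set c : ℝ := (μ S1).toReal * (μ S2).toReal * (μ S3).toReal with hc
  have hterm : ∀ n, ((ν (φ n)) (MixProof.blk ℓ ⁻¹' G3)).toReal = f (pqf (φ n)) + c := by
    intro n
    rw [hνap (φ n) ℓ G3]
    have hJ : (jm (φ n)) ⁻¹' (MixProof.blk ℓ ⁻¹' G3)
        = {x : ℤ → A | window ℓ 0 x ∈ E1 ∧ window ℓ ((p (φ n) : ℕ) : ℤ) x ∈ E2 ∧
            window ℓ ((p (φ n) : ℤ) + (q (φ n) : ℤ)) x ∈ E3} := by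
      ext x
      change ((fun i : Fin (ℓ+1) =>
          (MixProof.blk ℓ (jm (φ n) x) ⟨(i:ℕ)+ℓ, by have := i.isLt; omega⟩).1) ∈ E1 ∧
        (fun i : Fin (ℓ+1) =>
          (MixProof.blk ℓ (jm (φ n) x) ⟨(i:ℕ)+ℓ, by have := i.isLt; omega⟩).2.1) ∈ E2 ∧
        (fun i : Fin (ℓ+1) =>
          (MixProof.blk ℓ (jm (φ n) x) ⟨(i:ℕ)+ℓ, by have := i.isLt; omega⟩).2.2) ∈ E3) ↔ _
      have d1 : (fun i : Fin (ℓ+1) =>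
          (MixProof.blk ℓ (jm (φ n) x) ⟨(i:ℕ)+ℓ, by have := i.isLt; omega⟩).1)
          = window ℓ 0 x := by
        funext i
        show x _ = x _
        congr 1
        push_cast
        ring
      have d2 : (fun i : Fin (ℓ+1) =>
          (MixProof.blk ℓ (jm (φ n) x) ⟨(i:ℕ)+ℓ, by have := i.isLt; omega⟩).2.1)
          = window ℓ ((p (φ n) : ℕ) : ℤ) x := by
        funext i
        show x _ = x _
        congr 1
        push_cast
        ring
      have d3 : (fun i : Fin (ℓ+1) =>
          (MixProof.blk ℓ (jm (φ n) x) ⟨(i:ℕ)+ℓ, by have := i.isLt; omega⟩).2.2)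
          = window ℓ ((p (φ n) : ℤ) + (q (φ n) : ℤ)) x := by
        funext i
        show x _ = x _
        congr 1
        push_cast
        ring
      rw [d1, d2, d3]
      exact Iff.rfl
    rw [hJ]
    show (μ {x : ℤ → A | window ℓ 0 x ∈ E1 ∧ window ℓ ((p (φ n) : ℕ) : ℤ) x ∈ E2 ∧
        window ℓ ((p (φ n) : ℤ) + (q (φ n) : ℤ)) x ∈ E3}).toReal
      = ((μ {x : ℤ → A | window ℓ 0 x ∈ E1 ∧ window ℓ ((p (φ n) : ℕ) : ℤ) x ∈ E2 ∧
        window ℓ ((p (φ n) : ℤ) + (q (φ n) : ℤ)) x ∈ E3}).toReal - c) + c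
    ring
  have habs : ε ≤ |(ρ (MixProof.blk ℓ ⁻¹' G3)).toReal - c| := by
    have h1 : Tendsto (fun n => |((ν (φ n)) (MixProof.blk ℓ ⁻¹' G3)).toReal - c|) atTop
        (𝓝 |(ρ (MixProof.blk ℓ ⁻¹' G3)).toReal - c|) :=
      ((hρt ℓ G3).sub tendsto_const_nhds).abs
    refine le_of_tendsto_of_tendsto' tendsto_const_nhds h1 fun n => ?_
    rw [hterm n]
    simpa using hfge (φ n)
  -- assemble everything
  refine ⟨lam, ⟨?_, ?_, ?_, ?_⟩, ⟨?_, ?_, ?_⟩, ?_⟩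
  · -- shift invariance
    have hs3m : Measurable (shiftT3 A) :=
      (hshiftAm.comp measurable_fst).prodMk
        ((hshiftAm.comp (measurable_fst.comp measurable_snd)).prodMk
          (hshiftAm.comp (measurable_snd.comp measurable_snd)))
    have hcomp3 : shiftT3 A ∘ eF = eF ∘ (shiftT (A × A × A)) := rfl
    rw [hlam, Measure.map_map hs3m heFm, hcomp3,
      ← Measure.map_map heFm hshiftBm, hinvρ]
  · have hm : Measurable (fun pr : (ℤ → A) × (ℤ → A) × (ℤ → A) => pr.1) := measurable_fst
    rw [hlam, Measure.map_map hm heFm]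
    exact hmarg1
  · have hm : Measurable (fun pr : (ℤ → A) × (ℤ → A) × (ℤ → A) => pr.2.1) :=
      measurable_fst.comp measurable_snd
    rw [hlam, Measure.map_map hm heFm]
    exact hmarg2
  · have hm : Measurable (fun pr : (ℤ → A) × (ℤ → A) × (ℤ → A) => pr.2.2) :=
      measurable_snd.comp measurable_snd
    rw [hlam, Measure.map_map hm heFm]
    exact hmarg3
  · have hm : Measurable (fun pr : (ℤ → A) × (ℤ → A) × (ℤ → A) => (pr.1, pr.2.1)) :=
      measurable_fst.prodMk (measurable_fst.comp measurable_snd)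
    rw [hlam, Measure.map_map hm heFm]
    exact hp12
  · have hm : Measurable (fun pr : (ℤ → A) × (ℤ → A) × (ℤ → A) => (pr.1, pr.2.2)) :=
      measurable_fst.prodMk (measurable_snd.comp measurable_snd)
    rw [hlam, Measure.map_map hm heFm]
    exact hp13
  · have hm : Measurable (fun pr : (ℤ → A) × (ℤ → A) × (ℤ → A) => (pr.2.1, pr.2.2)) :=
      (measurable_fst.comp measurable_snd).prodMk (measurable_snd.comp measurable_snd)
    rw [hlam, Measure.map_map hm heFm]
    exact hp23
  · -- lam is not the product measure
    intro heq
    have hval3 : (ρ (MixProof.blk ℓ ⁻¹' G3)).toReal = c := by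
      have e1 : (ρ (MixProof.blk ℓ ⁻¹' G3)).toReal = (lam (S1 ×ˢ (S2 ×ˢ S3))).toReal := by
        rw [hlamS]
      rw [e1, heq, Measure.prod_prod, Measure.prod_prod, ENNReal.toReal_mul,
        ENNReal.toReal_mul, hc]
      ring
    rw [hval3] at habs
    simp only [sub_self, abs_zero] at habs
    exact absurd habs (not_le.mpr hε)
end

section
/- Let x : ℤ × ℤ → ZMod 2 satisfy the 3-dot rule x_{i,j} + x_{i+1,j} + x_{i,j+1} = 0 for all (i,j) ∈ ℤ². Then for every n ≥ 0 and all (i,j) ∈ ℤ², the scale-2^n 3-dot rule holds: x_{i,j} + x_{i+2^n,j} + x_{i,j+2^n} = 0. -/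
/-! Summing the scale-`d` rule at the three corners `(i, j)`, `(i + d, j)`, `(i, j + d)` of a
scale-`d` triangle yields the scale-`2d` rule, since in characteristic two the three dots shared
by two of the small triangles cancel. -/

def ThreeDotRule {R : Type*} [Add R] [Zero R] (x : ℤ × ℤ → R) (d : ℤ) : Prop :=
  ∀ i j : ℤ, x (i, j) + x (i + d, j) + x (i, j + d) = 0

namespace ThreeDotRule

variable {R : Type*} [CommRing R] [CharP R 2] {x : ℤ × ℤ → R}

theorem two_mul {d : ℤ} (h : ThreeDotRule x d) : ThreeDotRule x (2 * d) := by
  intro i j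
  have right : x (i + d, j) + x (i + 2 * d, j) + x (i + d, j + d) = 0 := by
    simpa only [add_assoc, ← Int.two_mul] using h (i + d) j
  have up : x (i, j + d) + x (i + d, j + d) + x (i, j + 2 * d) = 0 := by
    simpa only [add_assoc, ← Int.two_mul] using h i (j + d)
  linear_combination h i j + right + up -
    (x (i + d, j) + x (i, j + d) + x (i + d, j + d)) * CharTwo.two_eq_zero (R := R)

theorem pow_two (h : ThreeDotRule x 1) (n : ℕ) : ThreeDotRule x (2 ^ n) := by
  induction n with
  | zero => simpa only [pow_zero] using h
  | succ n ih => simpa only [pow_succ'] using ih.two_mul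

end ThreeDotRule

/-- **(Scale-`2^n` 3-dot rule.)**
If `x : ℤ × ℤ → ZMod 2` satisfies the 3-dot rule
`x (i,j) + x (i+1,j) + x (i,j+1) = 0` for all `(i,j) ∈ ℤ²`, then for every `n ≥ 0` and
all `(i,j) ∈ ℤ²`, the scale-`2^n` 3-dot rule `x (i,j) + x (i+2^n,j) + x (i,j+2^n) = 0`
holds. -/
theorem scale_pow_two_three_dot_rule
    (x : ℤ × ℤ → ZMod 2)
    (hx : ∀ i j : ℤ, x (i, j) + x (i + 1, j) + x (i, j + 1) = 0) :
    ∀ (n : ℕ) (i j : ℤ), x (i, j) + x (i + 2 ^ n, j) + x (i, j + 2 ^ n) = 0 :=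
  ThreeDotRule.pow_two hx
end

section
/- Let G := {x ∈ (ZMod 2)^{ℤ×ℤ} : x_{i,j} + x_{i+1,j} + x_{i,j+1} = 0 for all (i,j)} with its normalized Haar probability measure μ. Then the random field x under μ is 2-fold mixing: for every ℓ ≥ 0 and all sets E1, E2 of patterns on a size-ℓ square window, μ(the pattern of x on the window {0,…,ℓ}² lies in E1 and the pattern of x on the window v + {0,…,ℓ}² lies in E2) − μ(pattern on {0,…,ℓ}² ∈ E1)·μ(pattern on {0,…,ℓ}² ∈ E2) → 0 as ‖v‖ → ∞, v ∈ ℤ². -/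
open MeasureTheory Filter

/-- The 3-dot rule defining Ledrappier's group
`G = {x ∈ (ZMod 2)^{ℤ×ℤ} : x_{i,j} + x_{i+1,j} + x_{i,j+1} = 0 for all (i,j)}`. -/
def ThreeDotConfig (x : ℤ × ℤ → ZMod 2) : Prop :=
  ∀ i j : ℤ, x (i, j) + x (i + 1, j) + x (i, j + 1) = 0

/-- `μ` is the normalized Haar probability measure of the closed subgroup `G` of the
compact abelian group `(ZMod 2)^{ℤ×ℤ}`, viewed as a measure on the ambient product
space: it is the unique probability measure carried by `G` and invariant under
translation by every element of `G`. -/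
def IsHaarOnThreeDot (μ : Measure ((ℤ × ℤ) → ZMod 2)) : Prop :=
  IsProbabilityMeasure μ ∧ μ {x | ThreeDotConfig x} = 1 ∧
    ∀ g : (ℤ × ℤ) → ZMod 2, ThreeDotConfig g → μ.map (fun x => x + g) = μ

/-- The pattern of `x` on the size-`ℓ` square window based at `v`, namely the finite
configuration `(x_{v + u})_{u ∈ {0,…,ℓ}²}`. -/
def squarePattern (ℓ : ℕ) (v : ℤ × ℤ) (x : ℤ × ℤ → ZMod 2) :
    Fin (ℓ + 1) × Fin (ℓ + 1) → ZMod 2 :=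
  fun u => x (v.1 + (u.1 : ℕ), v.2 + (u.2 : ℕ))

namespace ThreeDot

def T (r : ℤ → ZMod 2) : ℤ → ZMod 2 := fun i => r i + r (i + 1)

def D (r : ℤ → ZMod 2) : ℤ → ZMod 2 := fun i =>
  if 0 ≤ i then ∑ k ∈ Finset.range i.toNat, r k
  else ∑ k ∈ Finset.range (-i).toNat, r (i + k)

lemma zmod2_aab : ∀ a b : ZMod 2, a + (a + b) = b := by decide

lemma T_D (r : ℤ → ZMod 2) : T (D r) = r := by
  funext i
  show D r i + D r (i + 1) = r i
  rcases le_or_gt 0 i with hi | hi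
  · have h1 : (0:ℤ) ≤ i + 1 := by omega
    have h2 : (i + 1).toNat = i.toNat + 1 := by omega
    simp only [D, if_pos hi, if_pos h1, h2, Finset.sum_range_succ,
      Int.toNat_of_nonneg hi]
    exact zmod2_aab _ _
  · rcases eq_or_lt_of_le (by omega : i ≤ -1) with he | hlt
    · subst he
      have e1 : D r (-1) = r (-1) := by
        simp [D, Finset.sum_range_succ]
      have e2 : D r 0 = 0 := by simp [D]
      norm_num [e1, e2]
    · have h1 : ¬ (0:ℤ) ≤ i + 1 := by omega
      have h2 : (-i).toNat = (-(i+1)).toNat + 1 := by omega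
      simp only [D, if_neg (by omega : ¬ (0:ℤ) ≤ i), if_neg h1, h2]
      rw [Finset.sum_range_succ']
      push_cast
      have h3 : ∀ k : ℕ, i + ((k:ℤ) + 1) = (i+1) + k := by intro k; ring
      simp only [h3, add_zero]
      rw [add_comm]
      exact zmod2_aab _ _

def build (r : ℤ → ZMod 2) : ℤ × ℤ → ZMod 2 := fun p =>
  if 0 ≤ p.2 then T^[p.2.toNat] r p.1 else D^[(-p.2).toNat] r p.1

lemma build_row_succ (r : ℤ → ZMod 2) (i j : ℤ) :
    build r (i, j + 1) = build r (i, j) + build r (i + 1, j) := by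
  rcases le_or_gt 0 j with hj | hj
  · have h1 : (0:ℤ) ≤ j + 1 := by omega
    have h2 : (j + 1).toNat = j.toNat + 1 := by omega
    simp only [build, if_pos hj, if_pos h1, h2]
    rw [Function.iterate_succ_apply']
    rfl
  · rcases eq_or_lt_of_le (by omega : j ≤ -1) with he | hlt
    · subst he
      have h1 : (-1:ℤ) + 1 = 0 := by norm_num
      simp only [build, h1, if_pos (le_refl (0:ℤ)), if_neg (by norm_num : ¬ (0:ℤ) ≤ -1)]
      norm_num
      exact (congrFun (T_D r) i).symm
    · have h1 : ¬ (0:ℤ) ≤ j + 1 := by omega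
      have h2 : (-j).toNat = (-(j+1)).toNat + 1 := by omega
      simp only [build, if_neg (by omega : ¬ (0:ℤ) ≤ j), if_neg h1, h2]
      rw [Function.iterate_succ_apply']
      exact (congrFun (T_D (D^[(-(j+1)).toNat] r)) i).symm

lemma zmod2_tdc : ∀ a b : ZMod 2, a + b + (a + b) = 0 := by decide

lemma build_tdc (r : ℤ → ZMod 2) : ThreeDotConfig (build r) := by
  intro i j
  rw [build_row_succ]
  exact zmod2_tdc _ _

lemma build_nonneg (r : ℤ → ZMod 2) (i : ℤ) (j : ℕ) :
    build r (i, (j : ℤ)) = T^[j] r i := by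
  simp [build]


lemma T_dep : ∀ (n : ℕ) (r r' : ℤ → ZMod 2) (i : ℤ),
    (∀ m, i ≤ m → m ≤ i + n → r m = r' m) → T^[n] r i = T^[n] r' i := by
  intro n
  induction n with
  | zero => intro r r' i h; simpa using h i le_rfl (by omega)
  | succ n ih =>
    intro r r' i h
    rw [Function.iterate_succ_apply, Function.iterate_succ_apply]
    apply ih
    intro m hm1 hm2
    show r m + r (m+1) = r' m + r' (m+1)
    rw [h m hm1 (by push_cast at hm2 ⊢; omega), h (m+1) (by omega) (by push_cast at hm2 ⊢; omega)]

lemma T_zero : ∀ n : ℕ, ∀ i, T^[n] (fun _ => (0 : ZMod 2)) i = 0 := by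
  intro n
  induction n with
  | zero => intro i; simp
  | succ n ih =>
    intro i
    rw [Function.iterate_succ_apply]
    have : T (fun _ => (0:ZMod 2)) = fun _ => (0:ZMod 2) := by
      funext m; simp [T]
    rw [this]; exact ih i

/-- If `r` vanishes outside `[lo, hi]` and `[i, i+n] ∩ [lo, hi] = ∅`, then `T^[n] r i = 0`. -/
lemma T_supp (n : ℕ) (r : ℤ → ZMod 2) (lo hi i : ℤ)
    (hr : ∀ m, m < lo ∨ hi < m → r m = 0) (h : i + n < lo ∨ hi < i) :
    T^[n] r i = 0 := by
  have := T_dep n r (fun _ => 0) i (by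
    intro m hm1 hm2
    apply hr
    omega)
  rw [this]; exact T_zero n i

lemma T_shift : ∀ (n : ℕ) (r : ℤ → ZMod 2) (c i : ℤ),
    T^[n] (fun m => r (m + c)) i = T^[n] r (i + c) := by
  intro n
  induction n with
  | zero => intro r c i; simp
  | succ n ih =>
    intro r c i
    rw [Function.iterate_succ_apply, Function.iterate_succ_apply]
    have : T (fun m => r (m + c)) = fun m => T r (m + c) := by
      funext m
      show r (m + c) + r (m + 1 + c) = r (m + c) + r (m + c + 1)
      ring_nf
    rw [this, ih (T r) c i]

lemma T_add : ∀ (n : ℕ) (p q : ℤ → ZMod 2) (i : ℤ),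
    T^[n] (fun m => p m + q m) i = T^[n] p i + T^[n] q i := by
  intro n
  induction n with
  | zero => intro p q i; simp
  | succ n ih =>
    intro p q i
    rw [Function.iterate_succ_apply, Function.iterate_succ_apply, Function.iterate_succ_apply]
    have : T (fun m => p m + q m) = fun m => T p m + T q m := by
      funext m
      show p m + q m + (p (m+1) + q (m+1)) = (p m + p (m+1)) + (q m + q (m+1))
      ring
    rw [this]; exact ih (T p) (T q) i

lemma T_frob : ∀ (n : ℕ) (r : ℤ → ZMod 2) (i : ℤ),
    T^[2^n] r i = r i + r (i + 2^n) := by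
  intro n
  induction n with
  | zero => intro r i; simp [T]
  | succ n ih =>
    intro r i
    have h2 : (2:ℕ)^(n+1) = 2^n + 2^n := by ring
    rw [h2, Function.iterate_add_apply, ih (T^[2^n] r) i, ih r i, ih r (i + 2^n)]
    have h3 : i + (2:ℤ)^n + (2:ℤ)^n = i + 2^(n+1) := by ring
    rw [h3]
    generalize r i = a
    generalize r (i + (2:ℤ)^n) = b
    generalize r (i + (2:ℤ)^(n+1)) = c
    revert a b c
    decide


lemma zmod2_solve : ∀ a b c : ZMod 2, a + b + c = 0 → c = a + b := by decide

lemma tdc_row (x : ℤ × ℤ → ZMod 2) (hx : ThreeDotConfig x) :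
    ∀ (j : ℕ) (i : ℤ), x (i, (j:ℤ)) = T^[j] (fun m => x (m, 0)) i := by
  intro j
  induction j with
  | zero => intro i; simp
  | succ j ih =>
    intro i
    have h1 : ((j+1 : ℕ) : ℤ) = (j:ℤ) + 1 := by push_cast; ring
    rw [h1, zmod2_solve _ _ _ (hx i j), Function.iterate_succ_apply']
    show _ = T^[j] (fun m => x (m,0)) i + T^[j] (fun m => x (m,0)) (i+1)
    rw [ih i, ih (i+1)]

lemma core (ℓ : ℕ) (a b : ℤ) (hb : 0 ≤ b)
    (hab : a + 2*(ℓ:ℤ) < 0 ∨ 2*(ℓ:ℤ) < a + b) (g : ℤ × ℤ → ZMod 2)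
    (hg : ThreeDotConfig g) :
    ∃ r : ℤ → ZMod 2,
      (∀ i j : ℤ, 0 ≤ i → i ≤ ℓ → 0 ≤ j → j ≤ ℓ → build r (i, j) = 0) ∧
      (∀ i j : ℤ, 0 ≤ i → i ≤ ℓ → 0 ≤ j → j ≤ ℓ → build r (a + i, b + j) = g (i, j)) := by
  set L : ℤ := (ℓ : ℤ) with hL
  set s : ℤ → ZMod 2 := fun m => if 0 ≤ m ∧ m ≤ 2*L then g (m, 0) else 0 with hs_def
  have hs : ∀ m, m < 0 ∨ 2*L < m → s m = 0 := by
    intro m hm; simp only [hs_def]; rw [if_neg]; omega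
  set n : ℕ := 2*ℓ + b.toNat + 1 with hn
  set N : ℕ := 2^n with hNdef
  have hN1 : 2*ℓ + b.toNat + 1 ≤ N := by
    rw [hNdef, hn]; exact le_of_lt Nat.lt_two_pow_self
  have hNL : 2*L < (N:ℤ) := by omega
  have hNb : b ≤ (N:ℤ) := by omega
  set t : ℕ := N - b.toNat with ht
  have htZ : (t:ℤ) = (N:ℤ) - b := by omega
  set c : ℤ := if 2*L < a + b then a + (N:ℤ) else a with hc
  set r : ℤ → ZMod 2 := fun m => T^[t] s (m + (-c)) with hr_def
  have hr0 : ∀ m, m < c - t ∨ c + 2*L < m → r m = 0 := by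
    intro m hm
    simp only [hr_def]
    exact T_supp t s 0 (2*L) (m + (-c)) hs (by omega)
  refine ⟨r, ?_, ?_⟩
  · intro i j hi1 hi2 hj1 hj2
    rw [show j = ((j.toNat : ℕ) : ℤ) by omega, build_nonneg]
    apply T_supp j.toNat r (c - t) (c + 2*L) i hr0
    rcases (by omega : 2*L < a + b ∨ ¬ 2*L < a + b) with h | h
    · left
      rw [hc, if_pos h]
      omega
    · right
      rcases hab with h' | h'
      · rw [hc, if_neg h]; omega
      · omega
  · intro i j hi1 hi2 hj1 hj2
    have hbj : 0 ≤ b + j := by omega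
    rw [show b + j = (((b+j).toNat : ℕ) : ℤ) by omega, build_nonneg]
    simp only [hr_def]
    rw [T_shift]
    rw [← Function.iterate_add_apply]
    have hJt : (b+j).toNat + t = j.toNat + N := by omega
    rw [hJt, Function.iterate_add_apply]
    have hfrob : T^[N] s = fun m => s m + s (m + (N:ℤ)) := by
      funext m; rw [hNdef]; exact T_frob n s m |>.trans (by push_cast; ring_nf)
    rw [hfrob, T_add]
    have hshift : T^[j.toNat] (fun m => s (m + (N:ℤ))) (a + i + -c)
        = T^[j.toNat] s (a + i + -c + N) := T_shift _ _ _ _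
    rw [hshift]
    have hmain : ∀ X : ℤ, X = i → T^[j.toNat] s X = g (i, j) := by
      intro X hX
      rw [hX]
      have : T^[j.toNat] s i = T^[j.toNat] (fun m => g (m, 0)) i := by
        apply T_dep
        intro m hm1 hm2
        simp only [hs_def]
        rw [if_pos (by omega)]
      rw [this, ← tdc_row g hg j.toNat i, show ((j.toNat : ℕ) : ℤ) = j by omega]
    have hkill : ∀ X : ℤ, X + j.toNat < 0 ∨ 2*L < X → T^[j.toNat] s X = 0 := by
      intro X hX
      exact T_supp j.toNat s 0 (2*L) X hs (by omega)
    rcases (by omega : 2*L < a + b ∨ ¬ 2*L < a + b) with h | h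
    · have hcc : c = a + (N:ℤ) := by rw [hc, if_pos h]
      rw [hkill (a + i + -c) (by omega), hmain (a + i + -c + N) (by omega), zero_add]
    · have h' : a + 2*L < 0 := by tauto
      have hcc : c = a := by rw [hc, if_neg h]
      rw [hmain (a + i + -c) (by omega), hkill (a + i + -c + N) (by omega), add_zero]


lemma zmod2_aab' : ∀ a b : ZMod 2, a + (a + b) = b := by decide

/-- Shift of a configuration. -/
def shv (v : ℤ × ℤ) (z : ℤ × ℤ → ZMod 2) : ℤ × ℤ → ZMod 2 :=
  fun p => z (v.1 + p.1, v.2 + p.2)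

lemma tdc_shv (v : ℤ × ℤ) (z : ℤ × ℤ → ZMod 2) (hz : ThreeDotConfig z) :
    ThreeDotConfig (shv v z) := by
  intro i j
  have h1 : v.1 + (i+1) = (v.1+i)+1 := by ring
  have h2 : v.2 + (j+1) = (v.2+j)+1 := by ring
  simp only [shv, h1, h2]
  exact hz _ _

lemma tdc_add (x y : ℤ × ℤ → ZMod 2) (hx : ThreeDotConfig x) (hy : ThreeDotConfig y) :
    ThreeDotConfig (x + y) := by
  intro i j
  simp only [Pi.add_apply]
  linear_combination hx i j + hy i j

lemma sp_shv (ℓ : ℕ) (c v : ℤ × ℤ) (z : ℤ × ℤ → ZMod 2) :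
    squarePattern ℓ c (shv v z) = squarePattern ℓ (v.1 + c.1, v.2 + c.2) z := by
  funext u
  simp only [squarePattern, shv, add_assoc]

def goodV (ℓ : ℕ) (v : ℤ × ℤ) : Prop :=
  ∀ x g, ThreeDotConfig x → ThreeDotConfig g →
    ∃ y, ThreeDotConfig y ∧ squarePattern ℓ (0,0) y = squarePattern ℓ (0,0) x ∧
      squarePattern ℓ v y = squarePattern ℓ v g

lemma ubound (ℓ : ℕ) (u : Fin (ℓ+1)) : 0 ≤ ((u:ℕ):ℤ) ∧ ((u:ℕ):ℤ) ≤ (ℓ:ℤ) := by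
  have := u.isLt
  omega

lemma core_good (ℓ : ℕ) (a b : ℤ) (hb : 0 ≤ b)
    (hab : a + 2*(ℓ:ℤ) < 0 ∨ 2*(ℓ:ℤ) < a + b) : goodV ℓ (a, b) := by
  intro x g hx hg
  obtain ⟨r, hr1, hr2⟩ := core ℓ a b hb hab (shv (a,b) (x + g))
    (tdc_shv _ _ (tdc_add _ _ hx hg))
  refine ⟨x + build r, tdc_add _ _ hx (build_tdc r), ?_, ?_⟩
  · funext u
    obtain ⟨hu1, hu2⟩ := ubound ℓ u.1
    obtain ⟨hv1, hv2⟩ := ubound ℓ u.2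
    simp only [squarePattern, Pi.add_apply]
    rw [hr1 _ _ (by omega) (by omega) (by omega) (by omega), add_zero]
  · funext u
    obtain ⟨hu1, hu2⟩ := ubound ℓ u.1
    obtain ⟨hv1, hv2⟩ := ubound ℓ u.2
    simp only [squarePattern, Pi.add_apply]
    rw [hr2 _ _ hu1 hu2 hv1 hv2]
    simp only [shv, Pi.add_apply]
    exact zmod2_aab' _ _

lemma goodV_sym (ℓ : ℕ) (a b : ℤ) (h : goodV ℓ (-a, -b)) : goodV ℓ (a, b) := by
  intro x g hx hg
  obtain ⟨y', hy', h0, hv⟩ := h (shv (a,b) g) (shv (a,b) x) (tdc_shv _ _ hg) (tdc_shv _ _ hx)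
  rw [sp_shv] at h0 hv
  refine ⟨shv (-a,-b) y', tdc_shv _ _ hy', ?_, ?_⟩
  · rw [sp_shv]
    norm_num at hv ⊢
    exact hv
  · rw [sp_shv]
    norm_num at h0 ⊢
    exact h0

lemma goodV_of_far (ℓ : ℕ) (a b : ℤ)
    (h : a < -(2*(ℓ:ℤ)) ∨ 2*(ℓ:ℤ) < a ∨ b < -(4*(ℓ:ℤ)) ∨ 4*(ℓ:ℤ) < b) :
    goodV ℓ (a, b) := by
  rcases le_or_gt 0 b with hb | hb
  · exact core_good ℓ a b hb (by omega)
  · exact goodV_sym ℓ a b (core_good ℓ (-a) (-b) (by omega) (by omega))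


lemma sp_add (ℓ : ℕ) (c : ℤ × ℤ) (x y : ℤ × ℤ → ZMod 2) :
    squarePattern ℓ c (x + y) = squarePattern ℓ c x + squarePattern ℓ c y := rfl

lemma meas_sp_fiber (ℓ : ℕ) (c : ℤ × ℤ) (q : Fin (ℓ+1) × Fin (ℓ+1) → ZMod 2) :
    MeasurableSet {x : (ℤ × ℤ) → ZMod 2 | squarePattern ℓ c x = q} := by
  have h : {x : (ℤ × ℤ) → ZMod 2 | squarePattern ℓ c x = q} =
      ⋂ u : Fin (ℓ+1) × Fin (ℓ+1),
        (fun x : (ℤ × ℤ) → ZMod 2 => x (c.1 + ((u.1 : ℕ) : ℤ), c.2 + ((u.2 : ℕ) : ℤ)))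
          ⁻¹' {q u} := by
    ext x
    simp [squarePattern, funext_iff]
  rw [h]
  exact MeasurableSet.iInter fun u =>
    (measurable_pi_apply _) (measurableSet_singleton _)

lemma meas_tdc : MeasurableSet {x : (ℤ × ℤ) → ZMod 2 | ThreeDotConfig x} := by
  have h : {x : (ℤ × ℤ) → ZMod 2 | ThreeDotConfig x} =
      ⋂ (i : ℤ) (j : ℤ),
        (fun x : (ℤ × ℤ) → ZMod 2 => x (i, j) + x (i+1, j) + x (i, j+1)) ⁻¹' {0} := by
    ext x; simp [ThreeDotConfig]
  rw [h]
  exact MeasurableSet.iInter fun i => MeasurableSet.iInter fun j =>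
    (((measurable_pi_apply (i,j)).add (M := ZMod 2) (measurable_pi_apply (i+1,j))).add (M := ZMod 2)
      (measurable_pi_apply (i,j+1))) (measurableSet_singleton _)

lemma meas_addg (g : (ℤ × ℤ) → ZMod 2) :
    Measurable (fun x : (ℤ × ℤ) → ZMod 2 => x + g) :=
  measurable_pi_lambda _ fun p => (measurable_pi_apply p).add_const (M := ZMod 2) (g p)

set_option maxHeartbeats 2000000 in
lemma meas_eq (μ : Measure ((ℤ × ℤ) → ZMod 2)) (hμ : IsHaarOnThreeDot μ) (ℓ : ℕ)
    (v : ℤ × ℤ) (hv : goodV ℓ v) (E1 E2 : Set (Fin (ℓ+1) × Fin (ℓ+1) → ZMod 2)) :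
    (μ {x | squarePattern ℓ (0,0) x ∈ E1 ∧ squarePattern ℓ v x ∈ E2}).toReal =
      (μ {x | squarePattern ℓ (0,0) x ∈ E1}).toReal *
        (μ {x | squarePattern ℓ (0,0) x ∈ E2}).toReal := by
  classical
  obtain ⟨hprob, hG, hinv⟩ := hμ
  have hmeas_fib : ∀ q1 q2 : Fin (ℓ+1) × Fin (ℓ+1) → ZMod 2,
      MeasurableSet {x | squarePattern ℓ (0,0) x = q1 ∧ squarePattern ℓ v x = q2} := by
    intro q1 q2
    rw [Set.setOf_and]
    exact (meas_sp_fiber ℓ (0,0) q1).inter (meas_sp_fiber ℓ v q2)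
  have hcompl : μ {x | ThreeDotConfig x}ᶜ = 0 := by
    rw [measure_compl meas_tdc (measure_ne_top μ _), measure_univ, hG, tsub_self]
  set κ := μ {x | squarePattern ℓ (0,0) x = 0 ∧ squarePattern ℓ v x = 0} with hκ
  have hfib_const : ∀ q1 q2, (∃ y, ThreeDotConfig y ∧ squarePattern ℓ (0,0) y = q1 ∧
      squarePattern ℓ v y = q2) →
      μ {x | squarePattern ℓ (0,0) x = q1 ∧ squarePattern ℓ v x = q2} = κ := by
    rintro q1 q2 ⟨y, hy, hy1, hy2⟩
    have hmap := hinv y hy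
    have hpre : (fun x => x + y) ⁻¹' {x | squarePattern ℓ (0,0) x = q1 ∧
        squarePattern ℓ v x = q2} =
        {x | squarePattern ℓ (0,0) x = 0 ∧ squarePattern ℓ v x = 0} := by
      ext x
      simp only [Set.mem_preimage, Set.mem_setOf_eq, sp_add, hy1, hy2,
        add_eq_right]
    calc μ {x | squarePattern ℓ (0,0) x = q1 ∧ squarePattern ℓ v x = q2}
        = μ.map (fun x => x + y) {x | squarePattern ℓ (0,0) x = q1 ∧
            squarePattern ℓ v x = q2} := by rw [hmap]
      _ = κ := by rw [Measure.map_apply (meas_addg y) (hmeas_fib q1 q2), hpre]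
  set Q : Finset (Fin (ℓ+1) × Fin (ℓ+1) → ZMod 2) :=
    Finset.univ.filter (fun q => ∃ h, ThreeDotConfig h ∧ squarePattern ℓ (0,0) h = q)
      with hQ
  have hval : ∀ q1 q2, μ {x | squarePattern ℓ (0,0) x = q1 ∧ squarePattern ℓ v x = q2}
      = if q1 ∈ Q ∧ q2 ∈ Q then κ else 0 := by
    intro q1 q2
    split_ifs with hcase
    · obtain ⟨hq1, hq2⟩ := hcase
      rw [hQ, Finset.mem_filter] at hq1 hq2
      obtain ⟨-, h1, hh1, he1⟩ := hq1
      obtain ⟨-, h2, hh2, he2⟩ := hq2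
      have hh2' : squarePattern ℓ v (shv (-v.1, -v.2) h2) = q2 := by
        rw [sp_shv]
        simpa using he2
      obtain ⟨y, hy, hye1, hye2⟩ := hv h1 (shv (-v.1, -v.2) h2) hh1 (tdc_shv _ _ hh2)
      exact hfib_const q1 q2 ⟨y, hy, by rw [hye1, he1], by rw [hye2, hh2']⟩
    · apply measure_mono_null _ hcompl
      rintro x ⟨h1, h2⟩
      intro hx
      apply hcase
      constructor
      · rw [hQ, Finset.mem_filter]
        exact ⟨Finset.mem_univ _, x, hx, h1⟩
      · rw [hQ, Finset.mem_filter]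
        refine ⟨Finset.mem_univ _, shv v x, tdc_shv _ _ hx, ?_⟩
        rw [sp_shv]
        have hvv : (v.1 + 0, v.2 + 0) = v := by simp
        rw [hvv]
        exact h2
  have hjoint : ∀ F1 F2 : Set (Fin (ℓ+1) × Fin (ℓ+1) → ZMod 2),
      μ {x | squarePattern ℓ (0,0) x ∈ F1 ∧ squarePattern ℓ v x ∈ F2} =
        ((((Set.toFinite F1).toFinset.filter (· ∈ Q)).card *
          (((Set.toFinite F2).toFinset.filter (· ∈ Q)).card) : ℕ)) * κ := by
    intro F1 F2
    have hdecomp : {x | squarePattern ℓ (0,0) x ∈ F1 ∧ squarePattern ℓ v x ∈ F2} =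
        ⋃ p ∈ ((Set.toFinite F1).toFinset ×ˢ (Set.toFinite F2).toFinset),
          {x | squarePattern ℓ (0,0) x = p.1 ∧ squarePattern ℓ v x = p.2} := by
      ext x
      simp only [Set.mem_setOf_eq, Set.mem_iUnion, Finset.mem_product,
        Set.Finite.mem_toFinset, exists_prop]
      constructor
      · rintro ⟨h1, h2⟩
        exact ⟨(squarePattern ℓ (0,0) x, squarePattern ℓ v x), ⟨h1, h2⟩, rfl, rfl⟩
      · rintro ⟨p, ⟨h1, h2⟩, e1, e2⟩
        rw [e1, e2]; exact ⟨h1, h2⟩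
    have hd : Set.PairwiseDisjoint
        (↑((Set.toFinite F1).toFinset ×ˢ (Set.toFinite F2).toFinset))
        (fun p : (Fin (ℓ+1) × Fin (ℓ+1) → ZMod 2) × (Fin (ℓ+1) × Fin (ℓ+1) → ZMod 2) =>
          {x | squarePattern ℓ (0,0) x = p.1 ∧ squarePattern ℓ v x = p.2}) := by
      rintro p hp p' hp' hne
      simp only [Function.onFun]
      rw [Set.disjoint_left]
      rintro x ⟨e1, e2⟩ ⟨e1', e2'⟩
      apply hne
      have : p.1 = p'.1 := by rw [← e1, ← e1']
      have h2' : p.2 = p'.2 := by rw [← e2, ← e2']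
      exact Prod.ext this h2'
    rw [hdecomp, measure_biUnion_finset hd (fun p _ => hmeas_fib p.1 p.2)]
    rw [Finset.sum_congr rfl (fun p _ => hval p.1 p.2), ← Finset.sum_filter,
      Finset.filter_product, Finset.sum_const, Finset.card_product, nsmul_eq_mul]
  -- abbreviations for cardinalities
  set A := ((Set.toFinite E1).toFinset.filter (· ∈ Q)).card with hA
  set B := ((Set.toFinite E2).toFinset.filter (· ∈ Q)).card with hB
  set n := Q.card with hn
  have huniv : ((Set.toFinite (Set.univ : Set (Fin (ℓ+1) × Fin (ℓ+1) → ZMod 2))).toFinset.filter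
      (· ∈ Q)).card = n := by
    rw [hn]
    congr 1
    ext q
    simp [Set.Finite.mem_toFinset]
  have h12 : μ {x | squarePattern ℓ (0,0) x ∈ E1 ∧ squarePattern ℓ v x ∈ E2}
      = ((A * B : ℕ)) * κ := hjoint E1 E2
  have h1 : μ {x | squarePattern ℓ (0,0) x ∈ E1} = ((A * n : ℕ)) * κ := by
    have hset : {x | squarePattern ℓ (0,0) x ∈ E1} =
        {x | squarePattern ℓ (0,0) x ∈ E1 ∧ squarePattern ℓ v x ∈ Set.univ} := by
      ext x; simp
    rw [hset, hjoint E1 Set.univ, huniv]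
  have h2 : μ {x | squarePattern ℓ (0,0) x ∈ E2} = ((B * n : ℕ)) * κ := by
    have hset : {x | squarePattern ℓ (0,0) x ∈ E2} =
        {x | squarePattern ℓ (0,0) x ∈ E2 ∧ squarePattern ℓ v x ∈ Set.univ} := by
      ext x; simp
    rw [hset, hjoint E2 Set.univ, huniv]
  have hnorm : (1 : ENNReal) = ((n * n : ℕ)) * κ := by
    have hset : (Set.univ : Set ((ℤ × ℤ) → ZMod 2)) =
        {x | squarePattern ℓ (0,0) x ∈ (Set.univ : Set _) ∧
          squarePattern ℓ v x ∈ (Set.univ : Set _)} := by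
      ext x; simp
    rw [← measure_univ (μ := μ), hset, hjoint Set.univ Set.univ, huniv]
  have hκtop : κ ≠ ⊤ := measure_ne_top μ _
  rw [h12, h1, h2]
  rw [ENNReal.toReal_mul, ENNReal.toReal_mul, ENNReal.toReal_mul]
  have hnormR : (1 : ℝ) = (n * n : ℕ) * κ.toReal := by
    have := congrArg ENNReal.toReal hnorm
    rwa [ENNReal.toReal_one, ENNReal.toReal_mul, ENNReal.toReal_natCast] at this
  rw [ENNReal.toReal_natCast, ENNReal.toReal_natCast, ENNReal.toReal_natCast]
  push_cast at hnormR ⊢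
  linear_combination ((A:ℝ) * (B:ℝ) * κ.toReal) * hnormR


end ThreeDot

/-- **(Ledrappier's 3-dot system is 2-fold mixing.)**
Let `μ` be the normalized Haar probability measure of the 3-dot group `G`.  Then for
every `ℓ ≥ 0` and all sets `E1, E2` of patterns on a size-`ℓ` square window,
`μ(pattern on {0,…,ℓ}² ∈ E1 and pattern on v + {0,…,ℓ}² ∈ E2) −
 μ(pattern ∈ E1) · μ(pattern ∈ E2) → 0` as `‖v‖ → ∞` in `ℤ²` (i.e. along the
cofinite filter of `ℤ²`). -/
theorem threeDot_system_mixing2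
    (μ : Measure ((ℤ × ℤ) → ZMod 2)) (hμ : IsHaarOnThreeDot μ)
    (ℓ : ℕ) (E1 E2 : Set (Fin (ℓ + 1) × Fin (ℓ + 1) → ZMod 2)) :
    Tendsto (fun v : ℤ × ℤ =>
        (μ {x | squarePattern ℓ (0, 0) x ∈ E1 ∧ squarePattern ℓ v x ∈ E2}).toReal -
          (μ {x | squarePattern ℓ (0, 0) x ∈ E1}).toReal *
            (μ {x | squarePattern ℓ (0, 0) x ∈ E2}).toReal)
      cofinite (nhds 0) := by
  have hgood : ∀ v : ℤ × ℤ, ThreeDot.goodV ℓ v →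
      (μ {x | squarePattern ℓ (0, 0) x ∈ E1 ∧ squarePattern ℓ v x ∈ E2}).toReal -
        (μ {x | squarePattern ℓ (0, 0) x ∈ E1}).toReal *
          (μ {x | squarePattern ℓ (0, 0) x ∈ E2}).toReal = 0 := by
    intro v hv
    rw [ThreeDot.meas_eq μ hμ ℓ v hv E1 E2, sub_self]
  have hfin : {v : ℤ × ℤ | ¬ ThreeDot.goodV ℓ v}.Finite := by
    apply Set.Finite.subset (Set.finite_Icc ((-(2*(ℓ:ℤ)), -(4*(ℓ:ℤ)))) ((2*(ℓ:ℤ)), 4*(ℓ:ℤ)))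
    intro v hv
    by_contra hmem
    apply hv
    have hv' : v = (v.1, v.2) := rfl
    rw [hv']
    apply ThreeDot.goodV_of_far
    simp only [Set.mem_Icc, Prod.le_def, not_and_or, not_le] at hmem
    omega
  have hev : ∀ᶠ v in (cofinite : Filter (ℤ × ℤ)), ThreeDot.goodV ℓ v :=
    Filter.eventually_cofinite.mpr hfin
  have heq : (fun _ : ℤ × ℤ => (0:ℝ)) =ᶠ[cofinite] (fun v : ℤ × ℤ =>
      (μ {x | squarePattern ℓ (0, 0) x ∈ E1 ∧ squarePattern ℓ v x ∈ E2}).toReal -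
        (μ {x | squarePattern ℓ (0, 0) x ∈ E1}).toReal *
          (μ {x | squarePattern ℓ (0, 0) x ∈ E2}).toReal) :=
    hev.mono fun v hv => (hgood v hv).symm
  exact Tendsto.congr' heq tendsto_const_nhds
end

section
/- Let G := {x ∈ (ZMod 2)^{ℤ×ℤ} : x_{i,j} + x_{i+1,j} + x_{i,j+1} = 0 for all (i,j)} with its normalized Haar probability measure μ. For every n ≥ 0, μ(x_{0,0} = 0, x_{2^n,0} = 0, x_{0,2^n} = 0) = 1/4, while μ(x_{0,0} = 0) = 1/2. Consequently the random field x under μ is not 3-fold mixing: the quantity μ(x_{0,0}=0, x_{2^n,0}=0, x_{0,2^n}=0) − μ(x_{0,0}=0)³ equals 1/8 for every n and does not tend to 0 although the mutual distances between the three windows {(0,0)}, {(2^n,0)}, {(0,2^n)} tend to infinity. -/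
open MeasureTheory Filter

/-!
On the 3-dot group the rule propagates to every dyadic scale, `x_{i,j+2^n} = x_{i,j} + x_{i+2^n,j}`
(Frobenius: `(1 + t)^{2^n} = 1 + t^{2^n}` over `𝔽₂`), so almost surely the third coordinate is
determined by the other two and the triple event is the pair event `x_{0,0} = x_{2^n,0} = 0`.
The pair `(x_{0,0}, x_{2^n,0})` is uniform on `𝔽₂²`: translating by the 3-periodic configurations
`[i + 2j ≢ c (mod 3)]`, which lie in the group, flips one coordinate while fixing the other,
since `2^n ≢ 0 (mod 3)`. Hence the triple has probability `1/4` rather than `1/8`.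
-/

section Translation

variable {ι : Type*} {μ : Measure (ι → ZMod 2)} {g : ι → ZMod 2}

theorem measure_inter_coord_eq_zero_eq_half (hg : μ.map (· + g) = μ) {A : Set (ι → ZMod 2)}
    (hA : MeasurableSet A) (hAg : (· + g) ⁻¹' A = A) {u : ι} (hgu : g u = 1) :
    μ (A ∩ {x | x u = 0}) = μ A / 2 := by
  have hpres : MeasurePreserving (· + g) μ μ := ⟨by fun_prop, hg⟩
  have hcoord (a : ZMod 2) : MeasurableSet {x : ι → ZMod 2 | x u = a} := by
    measurability
  have hswap : (· + g) ⁻¹' (A ∩ {x | x u = 1}) = A ∩ {x | x u = 0} := by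
    ext x
    simp only [Set.preimage_inter, hAg, Set.mem_inter_iff, Set.mem_preimage, Set.mem_ofPred_eq,
      Pi.add_apply, hgu]
    grind
  have hsplit : A \ {x | x u = 0} = A ∩ {x | x u = 1} := by
    ext x
    simp only [Set.mem_sdiff, Set.mem_inter_iff, Set.mem_ofPred_eq]
    refine and_congr_right fun _ => ?_
    generalize x u = a
    revert a
    decide
  have hequal : μ (A ∩ {x | x u = 0}) = μ (A ∩ {x | x u = 1}) := by
    rw [← hswap, hpres.measure_preimage (hA.inter (hcoord 1)).nullMeasurableSet]
  rw [← measure_inter_add_sdiff A (hcoord 0), hsplit, ← hequal, ← mul_two,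
    ENNReal.mul_div_cancel_right two_ne_zero ENNReal.ofNat_ne_top]

end Translation

namespace ThreeDotConfig

theorem measurableSet_setOf : MeasurableSet {x | ThreeDotConfig x} := by
  simp only [ThreeDotConfig, Set.ofPred_forall]
  measurability

theorem apply_add_two_pow {x : ℤ × ℤ → ZMod 2} (hx : ThreeDotConfig x) (n : ℕ) (i j : ℤ) :
    x (i, j + 2 ^ n) = x (i, j) + x (i + 2 ^ n, j) := by
  induction n generalizing i j with
  | zero => simpa using (by grind [hx i j] : x (i, j + 1) = x (i, j) + x (i + 1, j))
  | succ n ih =>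
    rw [pow_succ, mul_two, ← add_assoc, ← add_assoc, ih, ih, ih]
    grind

theorem apply_zero_two_pow {x : ℤ × ℤ → ZMod 2} (hx : ThreeDotConfig x) (n : ℕ) :
    x (0, 2 ^ n) = x (0, 0) + x (2 ^ n, 0) := by
  simpa using hx.apply_add_two_pow n 0 0

end ThreeDotConfig

theorem IsHaarOnThreeDot.ae_threeDotConfig {μ : Measure ((ℤ × ℤ) → ZMod 2)}
    (hμ : IsHaarOnThreeDot μ) : ∀ᵐ x ∂μ, ThreeDotConfig x := by
  obtain ⟨hprob, hG, -⟩ := hμ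
  exact (ae_iff_measure_eq ThreeDotConfig.measurableSet_setOf.nullMeasurableSet).2
    (by rw [hG, measure_univ])

def periodicThreeDot (c : ZMod 3) (p : ℤ × ℤ) : ZMod 2 :=
  if ((p.1 + 2 * p.2 : ℤ) : ZMod 3) = c then 0 else 1

theorem threeDotConfig_periodicThreeDot (c : ZMod 3) : ThreeDotConfig (periodicThreeDot c) := by
  intro i j
  -- exactly one of `m, m + 1, m + 2` is `c` mod 3, so the three dots sum to `1 + 1 + 0`
  simp only [periodicThreeDot]
  push_cast
  generalize (i : ZMod 3) = a
  generalize (j : ZMod 3) = b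
  revert a b c
  decide

theorem periodicThreeDot_apply_row_zero (c : ZMod 3) (i : ℤ) :
    periodicThreeDot c (i, 0) = if (i : ZMod 3) = c then 0 else 1 := by
  simp [periodicThreeDot]

/-- **(Ledrappier's 3-dot system is not 3-fold mixing.)**
Let `μ` be the normalized Haar probability measure of the 3-dot group `G`.  For every
`n ≥ 0`, `μ(x_{0,0} = 0, x_{2^n,0} = 0, x_{0,2^n} = 0) = 1/4` while `μ(x_{0,0}=0) = 1/2`;
consequently `μ(x_{0,0}=0, x_{2^n,0}=0, x_{0,2^n}=0) − μ(x_{0,0}=0)³ = 1/8` for every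
`n`, and it does not tend to `0` although the mutual distances between the three
windows `{(0,0)}`, `{(2^n,0)}`, `{(0,2^n)}` tend to infinity. -/
theorem threeDot_system_not_mixing3
    (μ : Measure ((ℤ × ℤ) → ZMod 2)) (hμ : IsHaarOnThreeDot μ) :
    (∀ n : ℕ,
        μ {x | x (0, 0) = 0 ∧ x ((2 : ℤ) ^ n, 0) = 0 ∧ x (0, (2 : ℤ) ^ n) = 0} = 1 / 4) ∧
      μ {x | x (0, 0) = 0} = 1 / 2 ∧
        ∀ n : ℕ,
          (μ {x | x (0, 0) = 0 ∧ x ((2 : ℤ) ^ n, 0) = 0 ∧ x (0, (2 : ℤ) ^ n) = 0}).toReal -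
              (μ {x | x (0, 0) = 0}).toReal ^ 3 = 1 / 8 := by
  have hae := hμ.ae_threeDotConfig
  obtain ⟨hprob, -, hinv⟩ := hμ
  have half : μ {x | x (0, 0) = 0} = 1 / 2 := by
    simpa using measure_inter_coord_eq_zero_eq_half (hinv _ (threeDotConfig_periodicThreeDot 1))
      MeasurableSet.univ Set.preimage_univ (u := (0, 0)) (by simp [periodicThreeDot_apply_row_zero])
  have quarter (n : ℕ) :
      μ {x | x (0, 0) = 0 ∧ x ((2 : ℤ) ^ n, 0) = 0 ∧ x (0, (2 : ℤ) ^ n) = 0} = 1 / 4 := by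
    have htriple : {x | x (0, 0) = 0 ∧ x ((2 : ℤ) ^ n, 0) = 0 ∧ x (0, (2 : ℤ) ^ n) = 0}
        =ᵐ[μ] ({x | x (0, 0) = 0} ∩ {x | x ((2 : ℤ) ^ n, 0) = 0} : Set (ℤ × ℤ → ZMod 2)) := by
      refine eventuallyEq_set.2 ?_
      filter_upwards [hae] with x hx
      simp only [Set.mem_inter_iff, Set.mem_ofPred_eq, hx.apply_zero_two_pow]
      grind
    rw [measure_congr htriple, measure_inter_coord_eq_zero_eq_half
      (hinv _ (threeDotConfig_periodicThreeDot 0)) (by measurability)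
      (by ext x; simp [periodicThreeDot_apply_row_zero])
      (by simp [periodicThreeDot_apply_row_zero, show (2 : ZMod 3) ≠ 0 by decide]), half,
      div_eq_mul_inv, one_div, ← ENNReal.mul_inv (by simp) (by simp)]
    norm_num
  refine ⟨quarter, half, fun n => ?_⟩
  rw [quarter n, half]
  norm_num [ENNReal.toReal_div]
end
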